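/- arXiv:2103.05998 — 5 statements merged into one kernel-verified Lean document; each statement's English description precedes it below -/
import Mathlib

section
/- For every positive integer k, the shift graph G_k has independence number exactly k^2. -/
/-- A finset of vertices is independent: no two of its elements are adjacent. -/
def IsIndepF {V : Type*} (G : SimpleGraph V) (s : Finset V) : Prop :=
  ∀ a ∈ s, ∀ b ∈ s, ¬ G.Adj a b

/-- The independence number of a finite graph: the maximum size of an independent set. -/
noncomputable def indepNum {V : Type*} [Fintype V] (G : SimpleGraph V) : ℕ :=
  sSup {n | ∃ s : Finset V, IsIndepF G s ∧ s.card = n}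

/-- The shift graph `G_k`: vertices are ordered pairs `(i,j)`, `i ≠ j`, of elements of
`{1,…,2k}` (here `Fin (2k)`), with `(a,b)` and `(c,d)` adjacent iff they are distinct and
`b = c` or `d = a`. -/
def shiftGraph (k : ℕ) :
    SimpleGraph {p : Fin (2 * k) × Fin (2 * k) // p.1 ≠ p.2} where
  Adj x y := x ≠ y ∧ (x.1.2 = y.1.1 ∨ y.1.2 = x.1.1)
  symm := by
    constructor
    rintro x y ⟨hxy, h⟩
    exact ⟨hxy.symm, h.symm⟩
  loopless := by
    constructor
    rintro x ⟨hx, -⟩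
    exact hx rfl

/-- For every positive integer `k`, the shift graph `G_k` has independence number `k²`. -/
theorem shiftGraph_indepNum (k : ℕ) (hk : 0 < k) :
    indepNum (shiftGraph k) = k ^ 2 := by
  have hmem : k ^ 2 ∈ {n | ∃ s : Finset {p : Fin (2 * k) × Fin (2 * k) // p.1 ≠ p.2},
      IsIndepF (shiftGraph k) s ∧ s.card = n} := by
    refine ⟨Finset.image (fun q : Fin k × Fin k =>
      (⟨(⟨q.1.val, by have := q.1.isLt; omega⟩, ⟨k + q.2.val, by have := q.2.isLt; omega⟩), by
        intro h
        have := congrArg Fin.val h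
        simp only at this
        have := q.1.isLt
        omega⟩ : {p : Fin (2*k) × Fin (2*k) // p.1 ≠ p.2})) Finset.univ, ?_, ?_⟩
    · intro a ha b hb hadj
      simp only [Finset.mem_image] at ha hb
      obtain ⟨qa, -, rfl⟩ := ha
      obtain ⟨qb, -, rfl⟩ := hb
      obtain ⟨-, h | h⟩ := hadj
      · have := congrArg Fin.val h
        simp only at this
        have := qb.1.isLt
        omega
      · have := congrArg Fin.val h
        simp only at this
        have := qa.1.isLt
        omega
    · rw [Finset.card_image_of_injective _ ?_, Finset.card_univ]
      · simp [sq]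
      · intro a b hab
        simp only [Subtype.mk.injEq, Prod.mk.injEq, Fin.mk.injEq] at hab
        obtain ⟨h1, h2⟩ := hab
        exact Prod.ext (Fin.ext h1) (Fin.ext (by omega))
  have hub : ∀ n ∈ {n | ∃ s : Finset {p : Fin (2 * k) × Fin (2 * k) // p.1 ≠ p.2},
      IsIndepF (shiftGraph k) s ∧ s.card = n}, n ≤ k ^ 2 := by
    rintro n ⟨s, hs, rfl⟩
    set T := s.image (fun v => v.1.1) with hT
    set H := s.image (fun v => v.1.2) with hH
    have hdisj : Disjoint T H := by
      rw [Finset.disjoint_left]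
      rintro x hxT hxH
      simp only [hT, hH, Finset.mem_image] at hxT hxH
      obtain ⟨v, hv, hv1⟩ := hxT
      obtain ⟨w, hw, hw2⟩ := hxH
      by_cases hvw : v = w
      · subst hvw
        exact v.2 (hv1.trans hw2.symm)
      · exact hs w hw v hv ⟨Ne.symm hvw, Or.inl (hw2.trans hv1.symm)⟩
    have hcard : s.card ≤ T.card * H.card := by
      rw [← Finset.card_product]
      apply Finset.card_le_card_of_injOn (fun v => (v.1.1, v.1.2))
      · intro v hv
        simp only [Finset.mem_coe, Finset.mem_product, hT, hH, Finset.mem_image]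
        exact ⟨⟨v, hv, rfl⟩, ⟨v, hv, rfl⟩⟩
      · intro v _ w _ h
        simp only [Prod.mk.injEq] at h
        exact Subtype.ext (Prod.ext h.1 h.2)
    have hsum : T.card + H.card ≤ 2 * k := by
      rw [← Finset.card_union_of_disjoint hdisj]
      calc (T ∪ H).card ≤ Fintype.card (Fin (2 * k)) := Finset.card_le_univ _
        _ = 2 * k := Fintype.card_fin _
    have : (T.card : ℤ) * H.card ≤ (k : ℤ) ^ 2 := by
      have h1 : (T.card : ℤ) + H.card ≤ 2 * k := by exact_mod_cast hsum
      nlinarith [sq_nonneg ((T.card : ℤ) - H.card), sq_nonneg ((T.card : ℤ) + H.card)]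
    have h2 : T.card * H.card ≤ k ^ 2 := by exact_mod_cast this
    omega
  exact le_antisymm (csSup_le ⟨_, hmem⟩ hub) (le_csSup ⟨k ^ 2, hub⟩ hmem)
end

section
/- Let m and t be positive integers with m even and 2t ≤ m. The independence number of the graph G_{m,t} equals ∑_{i=0}^{m/2−t} C(m,i). Equivalently (Kleitman's theorem for even diameter), the maximum cardinality of a set of vectors in {0,1}^m with pairwise Hamming distances at most m − 2t is ∑_{i=0}^{m/2−t} C(m,i). -/
/-- A maximum independent set: an independent set whose size is the independence number. -/
def IsMaxIndep {V : Type*} [Fintype V] (G : SimpleGraph V) (s : Finset V) : Prop :=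
  IsIndepF G s ∧ s.card = indepNum G

/-- The graph \`G_{m,t}\` on the binary vectors of length \`m\`: two distinct vectors are
adjacent iff their Hamming distance exceeds \`m - 2t\`. -/
def cubeGraph (m t : ℕ) : SimpleGraph (Fin m → Bool) where
  Adj x y := x ≠ y ∧ m - 2 * t < hammingDist x y
  symm := by
    constructor
    rintro x y ⟨hxy, h⟩
    exact ⟨hxy.symm, by rwa [hammingDist_comm]⟩
  loopless := by
    constructor
    rintro x ⟨hx, -⟩
    exact hx rfl

/-- The Hamming ball of radius \`r\` centered at \`c\`. -/
def hammingBall {m : ℕ} (c : Fin m → Bool) (r : ℕ) : Finset (Fin m → Bool) :=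
  Finset.univ.filter fun x => hammingDist x c ≤ r


namespace KleitmanProof
open Finset
open scoped FinsetFamily


lemma card_supersets {n u j : ℕ} (C : Finset ℕ) (hC : C ⊆ range n) (hCj : C.card = j)
    (hju : j ≤ u) :
    #{A ∈ (range n).powersetCard u | C ⊆ A} = (n - j).choose (u - j) := by
  have key : {A ∈ (range n).powersetCard u | C ⊆ A}
      = ((range n \ C).powersetCard (u - j)).image (· ∪ C) := by
    ext A
    simp only [mem_filter, mem_powersetCard, mem_image]
    constructor
    · rintro ⟨⟨hAn, hAu⟩, hCA⟩
      refine ⟨A \ C, ⟨sdiff_subset_sdiff hAn le_rfl, ?_⟩, by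
        rw [sdiff_union_self_eq_union, union_eq_left.2 hCA]⟩
      rw [card_sdiff_of_subset hCA, hAu, hCj]
    · rintro ⟨B, ⟨hBn, hBu⟩, rfl⟩
      have hBC : Disjoint B C := disjoint_sdiff_self_left.mono_left hBn
      refine ⟨⟨union_subset (hBn.trans sdiff_subset) hC, ?_⟩, subset_union_right⟩
      rw [card_union_of_disjoint hBC, hBu, hCj]
      omega
  rw [key, card_image_of_injOn, card_powersetCard, card_sdiff_of_subset hC, card_range, hCj]
  intro B hB B' hB' hE
  rw [mem_coe, mem_powersetCard] at hB hB'
  have h1 : Disjoint B C := disjoint_sdiff_self_left.mono_left hB.1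
  have h2 : Disjoint B' C := disjoint_sdiff_self_left.mono_left hB'.1
  calc B = (B ∪ C) \ C := by rw [union_sdiff_right, h1.sdiff_eq_left]
    _ = (B' ∪ C) \ C := by simp only at hE; rw [hE]
    _ = B' := by rw [union_sdiff_right, h2.sdiff_eq_left]




lemma katona_base {n u s : ℕ} (hs : 1 ≤ s) (hsu : s ≤ u) (hn : n + s = 2*u + 1)
    (G : Finset (Finset ℕ)) (hG : ∀ A ∈ G, A ⊆ range n ∧ #A = u) :
    G.card ≤ #(∂^[s-1] G) := by
  classical
  set N := ∂^[s-1] G with hN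
  set j := u - (s-1) with hj
  have hjs : u = j + (s-1) := by omega
  have hsized : ∀ C ∈ N, #C = j ∧ C ⊆ range n := by
    intro C hC
    rw [hN, mem_shadow_iterate_iff_exists_mem_card_add] at hC
    obtain ⟨A, hA, hCA, hcard⟩ := hC
    have := (hG A hA).2
    exact ⟨by omega, hCA.trans (hG A hA).1⟩
  have row : ∀ A ∈ G, {C ∈ N | C ⊆ A} = A.powersetCard j := by
    intro A hA
    ext C
    simp only [mem_filter, mem_powersetCard]
    constructor
    · rintro ⟨hCN, hCA⟩; exact ⟨hCA, (hsized C hCN).1⟩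
    · rintro ⟨hCA, hCj⟩
      refine ⟨?_, hCA⟩
      rw [hN, mem_shadow_iterate_iff_exists_mem_card_add]
      exact ⟨A, hA, hCA, by rw [(hG A hA).2, hCj]; omega⟩
  have swap : ∑ A ∈ G, #{C ∈ N | C ⊆ A} = ∑ C ∈ N, #{A ∈ G | C ⊆ A} := by
    simp_rw [card_filter]
    exact Finset.sum_comm
  have lhs : ∑ A ∈ G, #{C ∈ N | C ⊆ A} = #G * u.choose (s-1) := by
    rw [Finset.sum_congr rfl (fun A hA => by rw [row A hA, card_powersetCard, (hG A hA).2])]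
    rw [Finset.sum_const, smul_eq_mul]
    congr 1
    rw [hjs]; exact Nat.choose_symm_add
  have col : ∀ C ∈ N, #{A ∈ G | C ⊆ A} ≤ u.choose (s-1) := by
    intro C hC
    obtain ⟨hCj, hCn⟩ := hsized C hC
    have hsub : {A ∈ G | C ⊆ A} ⊆ {A ∈ (range n).powersetCard u | C ⊆ A} := by
      intro A hA
      simp only [mem_filter, mem_powersetCard] at hA ⊢
      exact ⟨⟨(hG A hA.1).1, (hG A hA.1).2⟩, hA.2⟩
    calc #{A ∈ G | C ⊆ A} ≤ #{A ∈ (range n).powersetCard u | C ⊆ A} := card_le_card hsub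
      _ = (n-j).choose (u-j) := card_supersets C hCn hCj (by omega)
      _ = u.choose (s-1) := by congr 1 <;> omega
  have total : #G * u.choose (s-1) ≤ #N * u.choose (s-1) := by
    rw [← lhs, swap]
    calc ∑ C ∈ N, #{A ∈ G | C ⊆ A} ≤ ∑ C ∈ N, u.choose (s-1) :=
          Finset.sum_le_sum col
      _ = #N * u.choose (s-1) := by rw [Finset.sum_const, smul_eq_mul]
  exact Nat.le_of_mul_le_mul_right total (Nat.choose_pos (by omega))



def Inter (s : ℕ) (G : Finset (Finset ℕ)) : Prop := ∀ A ∈ G, ∀ B ∈ G, s ≤ #(A ∩ B)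

lemma compress_singleton (x y : ℕ) (A : Finset ℕ) (hy : y ∈ A) (hx : x ∉ A) :
    UV.compress {x} {y} A = (A ∪ {x}) \ {y} := by
  rw [UV.compress, if_pos]
  · rw [sup_eq_union]
  · exact ⟨disjoint_singleton_left.2 hx, singleton_subset_iff.2 hy⟩

lemma compress_fix (x y : ℕ) (A : Finset ℕ) (h : y ∉ A ∨ x ∈ A) :
    UV.compress {x} {y} A = A := by
  rw [UV.compress, if_neg]
  rintro ⟨h1, h2⟩
  rw [disjoint_singleton_left] at h1
  have h2' : y ∈ A := singleton_subset_iff.1 h2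
  tauto

-- the moved set : case both moved
lemma sub_both {s x y : ℕ} (hxy : x ≠ y) {a b : Finset ℕ} (hya : y ∈ a) (hxa : x ∉ a)
    (hyb : y ∈ b) (hxb : x ∉ b) (h : s ≤ #(a ∩ b)) :
    s ≤ #(((a ∪ {x}) \ {y}) ∩ ((b ∪ {x}) \ {y})) := by
  have hset : ((a ∪ {x}) \ {y}) ∩ ((b ∪ {x}) \ {y}) = insert x ((a ∩ b).erase y) := by
    ext z
    simp only [mem_inter, mem_sdiff, mem_union, mem_singleton, mem_insert, mem_erase]
    constructor
    · rintro ⟨⟨hz1, hz2⟩, hz3, _⟩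
      rcases hz1 with h1 | rfl
      · rcases hz3 with h3 | rfl
        · exact Or.inr ⟨hz2, h1, h3⟩
        · exact Or.inl rfl
      · exact Or.inl rfl
    · rintro (rfl | ⟨hzy, hz1, hz2⟩)
      · exact ⟨⟨Or.inr rfl, hxy⟩, Or.inr rfl, hxy⟩
      · exact ⟨⟨Or.inl hz1, hzy⟩, Or.inl hz2, hzy⟩
  rw [hset, card_insert_of_notMem (by simp [hxa]), card_erase_of_mem (by simp [hya, hyb])]
  omega

-- kept A with x ∈ A, moved from b
lemma sub_kept1 {s x y : ℕ} (hxy : x ≠ y) {A b : Finset ℕ} (hxA : x ∈ A)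
    (hyb : y ∈ b) (hxb : x ∉ b) (h : s ≤ #(A ∩ b)) :
    s ≤ #(A ∩ ((b ∪ {x}) \ {y})) := by
  have hsub : insert x ((A ∩ b).erase y) ⊆ A ∩ ((b ∪ {x}) \ {y}) := by
    intro z hz
    simp only [mem_insert, mem_erase, mem_inter] at hz
    simp only [mem_inter, mem_sdiff, mem_union, mem_singleton]
    rcases hz with rfl | ⟨hzy, hz1, hz2⟩
    · exact ⟨hxA, Or.inr rfl, hxy⟩
    · exact ⟨hz1, Or.inl hz2, hzy⟩
  refine le_trans ?_ (card_le_card hsub)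
  by_cases hy : y ∈ A ∩ b
  · rw [card_insert_of_notMem (by simp [hxb]), card_erase_of_mem hy]; omega
  · rw [card_insert_of_notMem (by simp [hxb]), erase_eq_of_notMem hy]; omega

-- kept A with x ∉ A, y ∉ A
lemma sub_kept2 {s x y : ℕ} {A b : Finset ℕ} (hxA : x ∉ A) (hyA : y ∉ A)
    (h : s ≤ #(A ∩ b)) :
    s ≤ #(A ∩ ((b ∪ {x}) \ {y})) := by
  have hset : A ∩ ((b ∪ {x}) \ {y}) = A ∩ b := by
    ext z
    simp only [mem_inter, mem_sdiff, mem_union, mem_singleton]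
    constructor
    · rintro ⟨hz1, hz2 | rfl, hz3⟩
      · exact ⟨hz1, hz2⟩
      · exact absurd hz1 hxA
    · rintro ⟨hz1, hz2⟩
      exact ⟨hz1, Or.inl hz2, fun hzy => hyA (hzy ▸ hz1)⟩
  rw [hset]; exact h

-- kept A with x ∉ A, y ∈ A : compare with compressed A
lemma sub_kept3 {x y : ℕ} {A b : Finset ℕ} (hxA : x ∉ A) (hxb : x ∉ b) :
    A ∩ ((b ∪ {x}) \ {y}) = ((A ∪ {x}) \ {y}) ∩ b := by
  ext z
  simp only [mem_inter, mem_sdiff, mem_union, mem_singleton]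
  constructor
  · rintro ⟨hz1, hz2 | rfl, hz3⟩
    · exact ⟨⟨Or.inl hz1, hz3⟩, hz2⟩
    · exact absurd hz1 hxA
  · rintro ⟨⟨hz1 | rfl, hz2⟩, hz3⟩
    · exact ⟨hz1, Or.inl hz3, hz2⟩
    · exact absurd hz3 hxb

lemma inter_compression {s x y : ℕ} (hxy : x ≠ y) {G : Finset (Finset ℕ)} (h : Inter s G) :
    Inter s (UV.compression {x} {y} G) := by
  classical
  -- characterize membership
  have hmem : ∀ A ∈ UV.compression {x} {y} G,
      (A ∈ G ∧ UV.compress {x} {y} A ∈ G) ∨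
      (A ∉ G ∧ ∃ b ∈ G, y ∈ b ∧ x ∉ b ∧ A = (b ∪ {x}) \ {y}) := by
    intro A hA
    rw [UV.mem_compression] at hA
    rcases hA with h1 | ⟨h1, b, hb, hb2⟩
    · exact Or.inl h1
    · refine Or.inr ⟨h1, b, hb, ?_⟩
      by_cases hc : y ∈ b ∧ x ∉ b
      · exact ⟨hc.1, hc.2, by rw [← hb2, compress_singleton x y b hc.1 hc.2]⟩
      · exfalso
        rw [compress_fix x y b (by tauto)] at hb2
        exact h1 (hb2 ▸ hb)
  intro A hA B hB
  rcases hmem A hA with ⟨hAG, hAc⟩ | ⟨hAG, a, haG, hya, hxa, rfl⟩ <;>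
    rcases hmem B hB with ⟨hBG, hBc⟩ | ⟨hBG, b, hbG, hyb, hxb, rfl⟩
  · exact h A hAG B hBG
  · -- A kept, B moved
    by_cases hxA : x ∈ A
    · exact sub_kept1 hxy hxA hyb hxb (h A hAG b hbG)
    · by_cases hyA : y ∈ A
      · -- use compressed A
        rw [compress_singleton x y A hyA hxA] at hAc
        rw [sub_kept3 hxA hxb]
        exact h _ hAc b hbG
      · exact sub_kept2 hxA hyA (h A hAG b hbG)
  · -- A moved, B kept : symmetric
    rw [inter_comm]
    by_cases hxB : x ∈ B
    · exact sub_kept1 hxy hxB hya hxa (h B hBG a haG)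
    · by_cases hyB : y ∈ B
      · rw [compress_singleton x y B hyB hxB] at hBc
        rw [sub_kept3 hxB hxa]
        exact h _ hBc a haG
      · exact sub_kept2 hxB hyB (h B hBG a haG)
  · exact sub_both hxy hya hxa hyb hxb (h a haG b hbG)







lemma shadow_iterate_compression_subset (x y : ℕ) (r : ℕ) (G : Finset (Finset ℕ)) :
    ∂^[r] (UV.compression {x} {y} G) ⊆ UV.compression {x} {y} (∂^[r] G) := by
  induction r with
  | zero => exact subset_rfl
  | succ r ih =>
    rw [Function.iterate_succ_apply', Function.iterate_succ_apply']
    refine (shadow_mono ih).trans ?_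
    apply UV.shadow_compression_subset_compression_shadow
    intro a ha
    rw [mem_singleton] at ha
    subst ha
    refine ⟨y, mem_singleton_self y, ?_⟩
    rw [erase_singleton, erase_singleton]
    exact UV.isCompressed_self _ _

lemma card_shadow_iterate_compression_le (x y : ℕ) (r : ℕ) (G : Finset (Finset ℕ)) :
    #(∂^[r] (UV.compression {x} {y} G)) ≤ #(∂^[r] G) := by
  calc #(∂^[r] (UV.compression {x} {y} G)) ≤ #(UV.compression {x} {y} (∂^[r] G)) :=
        card_le_card (shadow_iterate_compression_subset x y r G)
    _ = #(∂^[r] G) := UV.card_compression _ _ _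

def fweight (A : Finset ℕ) : ℕ := ∑ a ∈ A, a

def fmeasure (G : Finset (Finset ℕ)) : ℕ := ∑ A ∈ G, fweight A

lemma mem_compression_cases {x y : ℕ} {G : Finset (Finset ℕ)} {A : Finset ℕ}
    (hA : A ∈ UV.compression {x} {y} G) :
    A ∈ G ∨ (A ∉ G ∧ ∃ b ∈ G, y ∈ b ∧ x ∉ b ∧ A = (b ∪ {x}) \ {y}) := by
  rw [UV.mem_compression] at hA
  rcases hA with h1 | ⟨h1, b, hb, hb2⟩
  · exact Or.inl h1.1
  · refine Or.inr ⟨h1, b, hb, ?_⟩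
    by_cases hc : y ∈ b ∧ x ∉ b
    · exact ⟨hc.1, hc.2, by rw [← hb2, compress_singleton x y b hc.1 hc.2]⟩
    · exfalso
      rw [compress_fix x y b (by tauto)] at hb2
      exact h1 (hb2 ▸ hb)

lemma fweight_compress {x y : ℕ} {b : Finset ℕ} (hxy : x ≠ y) (hy : y ∈ b) (hx : x ∉ b) :
    fweight ((b ∪ {x}) \ {y}) + y = fweight b + x := by
  have h1 : b ∪ {x} = insert x b := by rw [union_comm, insert_eq]
  have h2 : (b ∪ {x}) \ {y} = (insert x b).erase y := by
    rw [h1, sdiff_singleton_eq_erase]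
  rw [h2]
  unfold fweight
  rw [Finset.sum_erase_add _ _ (by simp [mem_insert, hy]), Finset.sum_insert hx]
  ring

lemma fmeasure_compression_lt {x y : ℕ} (hxy : x < y) {G : Finset (Finset ℕ)}
    (hne : UV.compression {x} {y} G ≠ G) :
    fmeasure (UV.compression {x} {y} G) < fmeasure G := by
  classical
  set c : Finset ℕ → Finset ℕ := UV.compress {x} {y} with hc
  have hdecomp : UV.compression {x} {y} G
      = {a ∈ G | c a ∈ G} ∪ ({a ∈ G | c a ∉ G}).image c := by
    rw [UV.compression, filter_image]
  have hdisj : Disjoint {a ∈ G | c a ∈ G} (({a ∈ G | c a ∉ G}).image c) := by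
    have := UV.compress_disjoint (u := ({x} : Finset ℕ)) (v := ({y} : Finset ℕ)) (s := G)
    rwa [filter_image] at this
  have hsum : fmeasure (UV.compression {x} {y} G)
      = ∑ a ∈ {a ∈ G | c a ∈ G}, fweight a + ∑ a ∈ {a ∈ G | c a ∉ G}, fweight (c a) := by
    rw [fmeasure, hdecomp, Finset.sum_union hdisj, Finset.sum_image]
    intro a ha b hb hab
    exact UV.compress_injOn (by simpa using ha) (by simpa using hb) hab
  have hGsum : fmeasure G = ∑ a ∈ {a ∈ G | c a ∈ G}, fweight a
      + ∑ a ∈ {a ∈ G | c a ∉ G}, fweight a := by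
    rw [fmeasure, ← Finset.sum_union (disjoint_filter_filter_not G G _)]
    rw [filter_union_filter_not_eq]
  have hnonempty : ({a ∈ G | c a ∉ G}).Nonempty := by
    by_contra hemp
    rw [not_nonempty_iff_eq_empty] at hemp
    apply hne
    rw [hdecomp, hemp, image_empty, union_empty]
    have : {a ∈ G | c a ∈ G} = G := by
      rw [filter_eq_self]
      intro a ha
      by_contra hca
      have : a ∈ {a ∈ G | c a ∉ G} := mem_filter.2 ⟨ha, hca⟩
      rw [hemp] at this
      exact notMem_empty _ this
    rw [this]
  have key : ∀ a ∈ {a ∈ G | c a ∉ G}, fweight (c a) < fweight a := by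
    intro a ha
    rw [mem_filter] at ha
    have hya : y ∈ a ∧ x ∉ a := by
      by_contra hc
      rw [not_and_or, not_not] at hc
      rw [show c a = a from compress_fix x y a (by tauto)] at ha
      exact ha.2 ha.1
    have := fweight_compress (Nat.ne_of_lt hxy) hya.1 hya.2
    have hceq : c a = (a ∪ {x}) \ {y} := compress_singleton x y a hya.1 hya.2
    rw [hceq]
    omega
  rw [hsum, hGsum]
  have : ∑ a ∈ {a ∈ G | c a ∉ G}, fweight (c a) < ∑ a ∈ {a ∈ G | c a ∉ G}, fweight a :=
    Finset.sum_lt_sum_of_nonempty hnonempty key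
  omega

lemma compression_uniform {x y n u : ℕ} (hxy : x < y) (hyn : y < n) {G : Finset (Finset ℕ)}
    (hu : ∀ A ∈ G, A ⊆ range n ∧ #A = u) :
    ∀ A ∈ UV.compression {x} {y} G, A ⊆ range n ∧ #A = u := by
  intro A hA
  rcases mem_compression_cases hA with h | ⟨-, b, hb, hyb, hxb, rfl⟩
  · exact hu A h
  · obtain ⟨hbn, hbu⟩ := hu b hb
    constructor
    · refine sdiff_subset.trans (union_subset hbn ?_)
      simp only [singleton_subset_iff, mem_range]
      omega
    · have h1 : b ∪ {x} = insert x b := by rw [union_comm, insert_eq]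
      rw [h1, sdiff_singleton_eq_erase, card_erase_of_mem (by simp [mem_insert, hyb]),
        card_insert_of_notMem hxb, hbu]
      omega

lemma exists_shifted (n r u s : ℕ) (G : Finset (Finset ℕ))
    (hu : ∀ A ∈ G, A ⊆ range n ∧ #A = u) (hi : Inter s G) :
    ∃ G' : Finset (Finset ℕ), #G' = #G ∧ #(∂^[r] G') ≤ #(∂^[r] G) ∧
      (∀ A ∈ G', A ⊆ range n ∧ #A = u) ∧ Inter s G' ∧
      (∀ x y, x < y → y < n → UV.IsCompressed {x} {y} G') := by
  classical
  generalize hM : fmeasure G = M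
  induction M using Nat.strong_induction_on generalizing G with
  | _ M ih =>
    by_cases hfix : ∀ x y, x < y → y < n → UV.IsCompressed {x} {y} G
    · exact ⟨G, rfl, le_rfl, hu, hi, hfix⟩
    · push_neg at hfix
      obtain ⟨x, y, hxy, hyn, hnot⟩ := hfix
      have hne : UV.compression {x} {y} G ≠ G := hnot
      set G₂ := UV.compression {x} {y} G with hG₂
      have hlt : fmeasure G₂ < M := hM ▸ fmeasure_compression_lt hxy hne
      obtain ⟨G', h1, h2, h3, h4, h5⟩ := ih (fmeasure G₂) hlt
        (hu := compression_uniform hxy hyn hu) (hi := inter_compression (Nat.ne_of_lt hxy) hi)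
        (hM := rfl)
      refine ⟨G', ?_, ?_, h3, h4, h5⟩
      · rw [h1, UV.card_compression]
      · exact h2.trans (card_shadow_iterate_compression_le x y r G)






lemma erase_inter' (m : ℕ) (A B : Finset ℕ) : A.erase m ∩ B.erase m = (A ∩ B).erase m := by
  ext z; simp only [mem_inter, mem_erase]; tauto

theorem katona (n : ℕ) : ∀ u s : ℕ, ∀ G : Finset (Finset ℕ), 1 ≤ s → s ≤ u →
    2*u + 1 ≤ n + s → (∀ A ∈ G, A ⊆ range n ∧ #A = u) → Inter s G →
    G.card ≤ #(∂^[s-1] G) := by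
  induction n using Nat.strong_induction_on with
  | _ n ih =>
  intro u s G hs hsu hn hG hint
  rcases G.eq_empty_or_nonempty with rfl | ⟨A₀, hA₀⟩
  · simp
  by_cases hus : u = s
  · -- G has at most one element, shadow is nonempty
    subst hus
    have hG1 : #G ≤ 1 := by
      refine card_le_one.2 fun A hA B hB => ?_
      have h1 : #(A ∩ B) ≤ #A := card_le_card inter_subset_left
      have h2 : u ≤ #(A ∩ B) := hint A hA B hB
      have h3 : A ∩ B = A := eq_of_subset_of_card_le inter_subset_left
        (by rw [(hG A hA).2]; exact h2)
      have hAB : A ⊆ B := by rw [← h3]; exact inter_subset_right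
      exact eq_of_subset_of_card_le hAB (by rw [(hG A hA).2, (hG B hB).2])
    obtain ⟨C, hCA, hCcard⟩ := Finset.exists_subset_card_eq
      (show u - (u-1) ≤ #A₀ by rw [(hG A₀ hA₀).2]; omega)
    have hCshadow : C ∈ ∂^[u-1] G := by
      rw [mem_shadow_iterate_iff_exists_mem_card_add]
      exact ⟨A₀, hA₀, hCA, by rw [(hG A₀ hA₀).2, hCcard]; omega⟩
    calc #G ≤ 1 := hG1
      _ ≤ #(∂^[u-1] G) := card_pos.2 ⟨C, hCshadow⟩
  · have husu : s < u := lt_of_le_of_ne hsu (Ne.symm hus)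
    by_cases hbase : n + s = 2*u + 1
    · exact katona_base hs hsu hbase G hG
    · have hroom : 2*u + 2 ≤ n + s := by omega
      obtain ⟨G', hcard, hshadow, hG', hint', hcomp⟩ := exists_shifted n (s-1) u s G hG hint
      have hn1 : 1 ≤ n := by omega
      set m := n - 1 with hm
      set G₀ := G'.filter (fun A => m ∉ A) with hG₀
      set G₁ := (G'.filter (fun A => m ∈ A)).image (fun A => A.erase m) with hG₁
      -- cardinalities
      have hinj : Set.InjOn (fun A : Finset ℕ => A.erase m) ((G'.filter (fun A => m ∈ A) : Finset (Finset ℕ)) : Set (Finset ℕ)) := by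
        intro A hA B hB hAB
        simp only [coe_filter, Set.mem_setOf_eq] at hA hB
        simp only at hAB
        rw [← insert_erase hA.2, hAB, insert_erase hB.2]
      have hcard1 : #G₁ = #(G'.filter (fun A => m ∈ A)) := card_image_of_injOn hinj
      have hcards : #G' = #G₀ + #G₁ := by
        rw [hcard1, hG₀]
        rw [add_comm]
        exact (card_filter_add_card_filter_not (fun A => m ∈ A)).symm
      -- G₀ properties
      have hG₀u : ∀ A ∈ G₀, A ⊆ range m ∧ #A = u := by
        intro A hA
        rw [hG₀, mem_filter] at hA
        obtain ⟨hA1, hA2⟩ := hA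
        refine ⟨fun z hz => ?_, (hG' A hA1).2⟩
        have := (hG' A hA1).1 hz
        rw [mem_range] at this ⊢
        have : z ≠ m := fun h => hA2 (h ▸ hz)
        omega
      have hG₀i : Inter s G₀ := fun A hA B hB =>
        hint' A (mem_filter.1 hA).1 B (mem_filter.1 hB).1
      have hIH₀ : #G₀ ≤ #(∂^[s-1] G₀) := by
        refine ih m (by omega) u s G₀ hs hsu (by omega) hG₀u hG₀i
      -- key claim : sets through m intersect in ≥ s+1
      have hkey : ∀ A ∈ G', ∀ B ∈ G', m ∈ A → m ∈ B → s + 1 ≤ #(A ∩ B) := by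
        intro A hA B hB hmA hmB
        by_contra hcon
        have hABs : #(A ∩ B) = s := le_antisymm (by omega) (hint' A hA B hB)
        have hABu : #(A ∪ B) + s = 2 * u := by
          have := card_union_add_card_inter A B
          rw [hABs, (hG' A hA).2, (hG' B hB).2] at this
          omega
        -- find x < m outside A ∪ B
        have hsubm : (A ∪ B) ∩ range m ⊆ (A ∪ B).erase m := by
          intro z hz
          rw [mem_inter, mem_range] at hz
          rw [mem_erase]
          exact ⟨by omega, hz.1⟩
        have hlt : #((A ∪ B) ∩ range m) < #(range m) := by
          have h1 : #((A ∪ B).erase m) = #(A ∪ B) - 1 :=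
            card_erase_of_mem (mem_union_left B hmA)
          have h2 := card_le_card hsubm
          rw [card_range]
          omega
        obtain ⟨x, hxr, hxAB⟩ : ∃ x ∈ range m, x ∉ (A ∪ B) ∩ range m := by
          by_contra hno
          push_neg at hno
          have : #(range m) ≤ #((A ∪ B) ∩ range m) := card_le_card fun z hz => hno z hz
          omega
        rw [mem_range] at hxr
        have hxA : x ∉ A := fun h => hxAB (mem_inter.2 ⟨mem_union_left _ h, mem_range.2 hxr⟩)
        have hxB : x ∉ B := fun h => hxAB (mem_inter.2 ⟨mem_union_right _ h, mem_range.2 hxr⟩)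
        -- compress A
        have hcompAx := hcomp x m hxr (by omega)
        have hA' : (A ∪ {x}) \ {m} ∈ G' := by
          have := UV.sup_sdiff_mem_of_mem_compression
            (s := G') (u := ({x} : Finset ℕ)) (v := ({m} : Finset ℕ))
            (by rw [hcompAx.eq]; exact hA)
            (singleton_subset_iff.2 hmA) (disjoint_singleton_left.2 hxA)
          simpa using this
        have hfinal := hint' _ hA' B hB
        have : ((A ∪ {x}) \ {m}) ∩ B = (A ∩ B).erase m := by
          ext z
          simp only [mem_inter, mem_sdiff, mem_union, mem_singleton, mem_erase]
          constructor
          · rintro ⟨⟨hz1 | rfl, hz2⟩, hz3⟩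
            · exact ⟨hz2, hz1, hz3⟩
            · exact absurd hz3 hxB
          · rintro ⟨hz1, hz2, hz3⟩
            exact ⟨⟨Or.inl hz2, hz1⟩, hz3⟩
        rw [this, card_erase_of_mem (mem_inter.2 ⟨hmA, hmB⟩), hABs] at hfinal
        omega
      -- G₁ properties
      have hG₁u : ∀ A ∈ G₁, A ⊆ range m ∧ #A = u - 1 := by
        intro A hA
        rw [hG₁, mem_image] at hA
        obtain ⟨B, hB, rfl⟩ := hA
        rw [mem_filter] at hB
        constructor
        · intro z hz
          rw [mem_erase] at hz
          have := (hG' B hB.1).1 hz.2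
          rw [mem_range] at this ⊢
          have := hz.1
          omega
        · rw [card_erase_of_mem hB.2, (hG' B hB.1).2]
      have hG₁i : Inter s G₁ := by
        intro A hA B hB
        rw [hG₁, mem_image] at hA hB
        obtain ⟨A', hA', rfl⟩ := hA
        obtain ⟨B', hB', rfl⟩ := hB
        rw [mem_filter] at hA' hB'
        rw [erase_inter']
        rw [card_erase_of_mem (mem_inter.2 ⟨hA'.2, hB'.2⟩)]
        have := hkey A' hA'.1 B' hB'.1 hA'.2 hB'.2
        omega
      have hIH₁ : #G₁ ≤ #(∂^[s-1] G₁) := by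
        refine ih m (by omega) (u-1) s G₁ hs (by omega) (by omega) hG₁u hG₁i
      -- combine shadows
      have hmreal : ∀ C ∈ ∂^[s-1] G₀, m ∉ C := by
        intro C hC hmC
        rw [mem_shadow_iterate_iff_exists_mem_card_add] at hC
        obtain ⟨A, hA, hCA, -⟩ := hC
        exact (mem_filter.1 hA).2 (hCA hmC)
      have hminD : ∀ D ∈ ∂^[s-1] G₁, m ∉ D := by
        intro D hD hmD
        rw [mem_shadow_iterate_iff_exists_mem_card_add] at hD
        obtain ⟨E, hE, hDE, -⟩ := hD
        have := (hG₁u E hE).1 (hDE hmD)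
        rw [mem_range] at this
        omega
      have hsub0 : ∂^[s-1] G₀ ⊆ ∂^[s-1] G' := by
        have : G₀ ⊆ G' := filter_subset _ _
        exact (shadow_monotone.iterate (s-1)) this
      have hsub1 : (∂^[s-1] G₁).image (insert m) ⊆ ∂^[s-1] G' := by
        intro C hC
        rw [mem_image] at hC
        obtain ⟨D, hD, rfl⟩ := hC
        rw [mem_shadow_iterate_iff_exists_mem_card_add] at hD ⊢
        obtain ⟨E, hE, hDE, hcardE⟩ := hD
        rw [hG₁, mem_image] at hE
        obtain ⟨B, hB, rfl⟩ := hE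
        rw [mem_filter] at hB
        refine ⟨B, hB.1, ?_, ?_⟩
        · refine insert_subset (hB.2) (hDE.trans (erase_subset _ _))
        · rw [card_insert_of_notMem (hminD D (by
            rw [mem_shadow_iterate_iff_exists_mem_card_add]
            exact ⟨B.erase m, by rw [hG₁]; exact mem_image_of_mem _ (mem_filter.2 hB), hDE, hcardE⟩)),
            (hG' B hB.1).2]
          rw [card_erase_of_mem hB.2, (hG' B hB.1).2] at hcardE
          omega
      have hdisj : Disjoint (∂^[s-1] G₀) ((∂^[s-1] G₁).image (insert m)) := by
        rw [disjoint_left]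
        intro C hC hC'
        rw [mem_image] at hC'
        obtain ⟨D, hD, rfl⟩ := hC'
        exact hmreal _ hC (mem_insert_self m D)
      have hinj2 : Set.InjOn (insert m) ((∂^[s-1] G₁ : Finset (Finset ℕ)) : Set (Finset ℕ)) := by
        intro D hD E hE hDE
        rw [mem_coe] at hD hE
        have h1 := hminD D hD
        have h2 := hminD E hE
        rw [← erase_insert h1, hDE, erase_insert h2]
      have hcombine : #(∂^[s-1] G₀) + #(∂^[s-1] G₁) ≤ #(∂^[s-1] G') := by
        rw [← card_image_of_injOn hinj2, ← card_union_of_disjoint hdisj]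
        exact card_le_card (union_subset hsub0 hsub1)
      calc #G = #G' := hcard.symm
        _ = #G₀ + #G₁ := hcards
        _ ≤ #(∂^[s-1] G₀) + #(∂^[s-1] G₁) := by omega
        _ ≤ #(∂^[s-1] G') := hcombine
        _ ≤ #(∂^[s-1] G) := hshadow



lemma symmDiff_erase_right {a : ℕ} (A t : Finset ℕ) (haA : a ∈ A) (hat : a ∈ t) :
    symmDiff A (t.erase a) = symmDiff (A.erase a) t := by
  ext z
  simp only [mem_symmDiff, mem_erase]
  by_cases hz : z = a
  · subst hz; tauto
  · tauto

lemma symmDiff_erase_right' {a : ℕ} (A t : Finset ℕ) (haA : a ∉ A) (hat : a ∈ t) :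
    symmDiff A (t.erase a) = (symmDiff A t).erase a := by
  ext z
  simp only [mem_symmDiff, mem_erase]
  by_cases hz : z = a
  · subst hz; tauto
  · tauto

lemma symmDiff_erase_both {a : ℕ} (t₁ t₂ : Finset ℕ) (h1 : a ∈ t₁) (h2 : a ∈ t₂) :
    symmDiff (t₁.erase a) (t₂.erase a) = symmDiff t₁ t₂ := by
  ext z
  simp only [mem_symmDiff, mem_erase]
  by_cases hz : z = a
  · subst hz; tauto
  · tauto

lemma down_mem_cases {a : ℕ} {𝒜 : Finset (Finset ℕ)} {A : Finset ℕ}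
    (hA : A ∈ Down.compression a 𝒜) :
    (A ∈ 𝒜 ∧ A.erase a ∈ 𝒜) ∨ (A ∉ 𝒜 ∧ a ∉ A ∧ insert a A ∈ 𝒜) := by
  rw [Down.mem_compression] at hA
  rcases hA with h | h
  · exact Or.inl h
  · obtain ⟨h1, h2⟩ := h
    refine Or.inr ⟨h1, fun ha => h1 ?_, h2⟩
    rwa [insert_eq_of_mem ha] at h2

lemma down_compression_diam {d : ℕ} {a : ℕ} {𝒜 : Finset (Finset ℕ)}
    (h : ∀ A ∈ 𝒜, ∀ B ∈ 𝒜, #(symmDiff A B) ≤ d) :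
    ∀ A ∈ Down.compression a 𝒜, ∀ B ∈ Down.compression a 𝒜, #(symmDiff A B) ≤ d := by
  have main : ∀ A, (A ∈ 𝒜 ∧ A.erase a ∈ 𝒜) → ∀ B, (B ∉ 𝒜 ∧ a ∉ B ∧ insert a B ∈ 𝒜) →
      #(symmDiff A B) ≤ d := by
    rintro A ⟨hA, hAe⟩ B ⟨-, haB, ht⟩
    have hBt : B = (insert a B).erase a := by rw [erase_insert haB]
    by_cases haA : a ∈ A
    · rw [hBt, symmDiff_erase_right A _ haA (mem_insert_self a B)]
      exact h _ hAe _ ht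
    · rw [hBt, symmDiff_erase_right' A _ haA (mem_insert_self a B)]
      exact le_trans (card_le_card (erase_subset _ _)) (h _ hA _ ht)
  intro A hA B hB
  rcases down_mem_cases hA with hA' | hA' <;> rcases down_mem_cases hB with hB' | hB'
  · exact h _ hA'.1 _ hB'.1
  · exact main A hA' B hB'
  · rw [symmDiff_comm]; exact main B hB' A hA'
  · obtain ⟨-, haA, htA⟩ := hA'
    obtain ⟨-, haB, htB⟩ := hB'
    have : symmDiff A B = symmDiff (insert a A) (insert a B) := by
      rw [← symmDiff_erase_both (a := a) _ _ (mem_insert_self _ _) (mem_insert_self _ _),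
        erase_insert haA, erase_insert haB]
    rw [this]
    exact h _ htA _ htB

def fmeasure2 (𝒜 : Finset (Finset ℕ)) : ℕ := ∑ A ∈ 𝒜, #A

lemma down_fmeasure2_lt {a : ℕ} {𝒜 : Finset (Finset ℕ)} (hne : Down.compression a 𝒜 ≠ 𝒜) :
    fmeasure2 (Down.compression a 𝒜) < fmeasure2 𝒜 := by
  classical
  have hdecomp : Down.compression a 𝒜
      = {s ∈ 𝒜 | s.erase a ∈ 𝒜} ∪ ({s ∈ 𝒜 | s.erase a ∉ 𝒜}).image (fun s => s.erase a) := by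
    rw [Down.compression, disjUnion_eq_union, filter_image]
  have hdisj : Disjoint {s ∈ 𝒜 | s.erase a ∈ 𝒜} (({s ∈ 𝒜 | s.erase a ∉ 𝒜}).image (fun s => s.erase a)) := by
    rw [disjoint_left]
    intro s hs hs'
    rw [mem_image] at hs'
    obtain ⟨t, ht, rfl⟩ := hs'
    exact (mem_filter.1 ht).2 (mem_filter.1 hs).1
  have hinj : Set.InjOn (fun s : Finset ℕ => s.erase a)
      (({s ∈ 𝒜 | s.erase a ∉ 𝒜} : Finset (Finset ℕ)) : Set (Finset ℕ)) := by
    intro A hA B hB hAB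
    rw [mem_coe, mem_filter] at hA hB
    have haA : a ∈ A := by
      by_contra hc; exact hA.2 (by rw [erase_eq_of_notMem hc]; exact hA.1)
    have haB : a ∈ B := by
      by_contra hc; exact hB.2 (by rw [erase_eq_of_notMem hc]; exact hB.1)
    simp only at hAB
    rw [← insert_erase haA, hAB, insert_erase haB]
  have hnonempty : ({s ∈ 𝒜 | s.erase a ∉ 𝒜}).Nonempty := by
    by_contra hemp
    rw [not_nonempty_iff_eq_empty] at hemp
    apply hne
    rw [hdecomp, hemp, image_empty, union_empty, filter_eq_self]
    intro s hs
    by_contra hc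
    have : s ∈ {s ∈ 𝒜 | s.erase a ∉ 𝒜} := mem_filter.2 ⟨hs, hc⟩
    rw [hemp] at this
    exact notMem_empty _ this
  have hsum : fmeasure2 (Down.compression a 𝒜)
      = ∑ s ∈ {s ∈ 𝒜 | s.erase a ∈ 𝒜}, #s + ∑ s ∈ {s ∈ 𝒜 | s.erase a ∉ 𝒜}, #(s.erase a) := by
    rw [fmeasure2, hdecomp, Finset.sum_union hdisj, Finset.sum_image hinj]
  have hsum2 : fmeasure2 𝒜 = ∑ s ∈ {s ∈ 𝒜 | s.erase a ∈ 𝒜}, #s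
      + ∑ s ∈ {s ∈ 𝒜 | s.erase a ∉ 𝒜}, #s := by
    rw [fmeasure2, ← Finset.sum_union (disjoint_filter_filter_not 𝒜 𝒜 _),
      filter_union_filter_not_eq]
  have key : ∀ s ∈ {s ∈ 𝒜 | s.erase a ∉ 𝒜}, #(s.erase a) < #s := by
    intro s hs
    rw [mem_filter] at hs
    have haS : a ∈ s := by
      by_contra hc; exact hs.2 (by rw [erase_eq_of_notMem hc]; exact hs.1)
    rw [card_erase_of_mem haS]
    have := card_pos.2 ⟨a, haS⟩
    omega
  have := Finset.sum_lt_sum_of_nonempty hnonempty key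
  omega

lemma exists_lower_set (n d : ℕ) (𝒜 : Finset (Finset ℕ)) (hsub : ∀ A ∈ 𝒜, A ⊆ range n)
    (hd : ∀ A ∈ 𝒜, ∀ B ∈ 𝒜, #(symmDiff A B) ≤ d) :
    ∃ ℬ : Finset (Finset ℕ), #ℬ = #𝒜 ∧ (∀ A ∈ ℬ, A ⊆ range n) ∧
      (∀ A ∈ ℬ, ∀ B ∈ ℬ, #(symmDiff A B) ≤ d) ∧
      (∀ A ∈ ℬ, ∀ B : Finset ℕ, B ⊆ A → B ∈ ℬ) := by
  classical
  generalize hM : fmeasure2 𝒜 = M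
  induction M using Nat.strong_induction_on generalizing 𝒜 with
  | _ M ih =>
  by_cases hfix : ∀ a ∈ range n, Down.compression a 𝒜 = 𝒜
  · refine ⟨𝒜, rfl, hsub, hd, ?_⟩
    -- lower set
    suffices H : ∀ p : ℕ, ∀ A ∈ 𝒜, ∀ B : Finset ℕ, B ⊆ A → #(A \ B) = p → B ∈ 𝒜 by
      intro A hA B hB
      exact H #(A \ B) A hA B hB rfl
    intro p
    induction p with
    | zero =>
      intro A hA B hBA hp
      rw [Finset.card_eq_zero, sdiff_eq_empty_iff_subset] at hp
      rwa [← subset_antisymm hp hBA]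
    | succ p ihp =>
      intro A hA B hBA hp
      have hne : (A \ B).Nonempty := by rw [← card_pos, hp]; omega
      obtain ⟨b, hb⟩ := hne
      rw [mem_sdiff] at hb
      have hbn : b ∈ range n := hsub A hA hb.1
      have hAe : A.erase b ∈ 𝒜 := by
        have := Down.erase_mem_compression (a := b) hA
        rwa [hfix b hbn] at this
      refine ihp (A.erase b) hAe B (fun z hz => mem_erase.2 ⟨fun h => hb.2 (h ▸ hz), hBA hz⟩) ?_
      have : A.erase b \ B = (A \ B).erase b := by
        ext z
        simp only [mem_sdiff, mem_erase]
        tauto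
      rw [this, card_erase_of_mem (mem_sdiff.2 hb), hp]
      omega
  · push_neg at hfix
    obtain ⟨a, han, hne⟩ := hfix
    set 𝒜₂ := Down.compression a 𝒜 with h𝒜₂
    have hlt : fmeasure2 𝒜₂ < M := hM ▸ down_fmeasure2_lt hne
    have hsub2 : ∀ A ∈ 𝒜₂, A ⊆ range n := by
      intro A hA
      rcases down_mem_cases hA with h | ⟨-, -, h⟩
      · exact hsub A h.1
      · exact (subset_insert a A).trans (hsub _ h)
    obtain ⟨ℬ, h1, h2, h3, h4⟩ := ih (fmeasure2 𝒜₂) hlt 𝒜₂ hsub2 (down_compression_diam hd) rfl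
    exact ⟨ℬ, by rw [h1, h𝒜₂, Down.card_compression], h2, h3, h4⟩






lemma symmDiff_of_disjoint {A B : Finset ℕ} (h : Disjoint A B) : symmDiff A B = A ∪ B := by
  ext z
  simp only [mem_symmDiff, mem_union]
  have := disjoint_left.1 h
  constructor
  · tauto
  · rintro (hz | hz)
    · exact Or.inl ⟨hz, fun hB => this hz hB⟩
    · exact Or.inr ⟨hz, fun hA => this hA hz⟩

lemma symmDiff_sdiff_self (A B : Finset ℕ) : symmDiff A (B \ A) = A ∪ B := by
  ext z
  simp only [mem_symmDiff, mem_sdiff, mem_union]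
  tauto

theorem kleitman_family (n k : ℕ) (hn : 2*k + 1 ≤ n) (𝒜 : Finset (Finset ℕ))
    (hsub : ∀ A ∈ 𝒜, A ⊆ range n)
    (hd : ∀ A ∈ 𝒜, ∀ B ∈ 𝒜, #(symmDiff A B) ≤ 2*k) :
    𝒜.card ≤ ∑ i ∈ range (k+1), n.choose i := by
  classical
  obtain ⟨ℬ, hcardB, hsubB, hdB, hlow⟩ := exists_lower_set n (2*k) 𝒜 hsub hd
  rw [← hcardB]
  rcases ℬ.eq_empty_or_nonempty with rfl | ⟨A₀, hA₀⟩
  · simp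
  have hEmptyMem : ∅ ∈ ℬ := hlow A₀ hA₀ ∅ (empty_subset _)
  set L : ℕ → Finset (Finset ℕ) := fun i => ℬ.filter (fun A => #A = i) with hL
  have hLmem : ∀ i A, A ∈ L i ↔ A ∈ ℬ ∧ #A = i := by
    intro i A
    rw [hL]
    exact mem_filter
  have hLsub : ∀ i, (L i) ⊆ (range n).powersetCard i := by
    intro i A hA
    rw [hLmem] at hA
    rw [mem_powersetCard]
    exact ⟨hsubB A hA.1, hA.2⟩
  have hhigh : ∀ A ∈ ℬ, #A ≤ 2*k := by
    intro A hA
    have := hdB A hA ∅ hEmptyMem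
    rwa [symmDiff_of_disjoint (disjoint_empty_right A), union_empty] at this
  have hpartition : #ℬ = ∑ i ∈ range (2*k+1), #(L i) := by
    exact card_eq_sum_card_fiberwise (fun A hA => mem_range.2 (by
      have := hhigh A hA; omega))
  -- the key pairing bound
  have hpair : ∀ i, k+1 ≤ i → i ≤ 2*k → #(L i) + #(L (2*k+1-i)) ≤ n.choose (2*k+1-i) := by
    intro i hi1 hi2
    set j := 2*k+1-i with hj
    set u := n - i with hu
    set s := n - 2*k with hs
    have hiu : ∀ A ∈ L i, #A = i ∧ A ⊆ range n := by
      intro A hA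
      rw [hLmem] at hA
      exact ⟨hA.2, hsubB A hA.1⟩
    set G := (L i).image (fun A => range n \ A) with hG
    have hGcard : #G = #(L i) := by
      refine card_image_of_injOn ?_
      intro A hA B hB hAB
      rw [mem_coe] at hA hB
      simp only at hAB
      have h1 : range n \ (range n \ A) = A := Finset.sdiff_sdiff_eq_self (hiu A hA).2
      have h2 : range n \ (range n \ B) = B := Finset.sdiff_sdiff_eq_self (hiu B hB).2
      rw [← h1, hAB, h2]
    have hGu : ∀ E ∈ G, E ⊆ range n ∧ #E = u := by
      intro E hE
      rw [hG, mem_image] at hE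
      obtain ⟨A, hA, rfl⟩ := hE
      exact ⟨sdiff_subset, by rw [card_sdiff_of_subset (hiu A hA).2, card_range, (hiu A hA).1]⟩
    have hunion_le : ∀ A ∈ L i, ∀ B ∈ L i, #(A ∪ B) ≤ 2*k := by
      intro A hA B hB
      have hAB : A ∈ ℬ := ((hLmem _ _).1 hA).1
      have hBB : B ∈ ℬ := ((hLmem _ _).1 hB).1
      have hBA : B \ A ∈ ℬ := hlow B hBB _ sdiff_subset
      have := hdB A hAB _ hBA
      rwa [symmDiff_sdiff_self] at this
    have hGi : Inter s G := by
      intro E hE F hF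
      rw [hG, mem_image] at hE hF
      obtain ⟨A, hA, rfl⟩ := hE
      obtain ⟨B, hB, rfl⟩ := hF
      have hset : (range n \ A) ∩ (range n \ B) = range n \ (A ∪ B) := by
        rw [sdiff_union_distrib]
      rw [hset, card_sdiff_of_subset (union_subset (hiu A hA).2 (hiu B hB).2), card_range]
      have := hunion_le A hA B hB
      omega
    have hkatona : #G ≤ #(∂^[s-1] G) := by
      refine katona n u s G (by omega) (by omega) (by omega) hGu hGi
    -- shadow elements are disjoint from L j and live in level j
    have hshadow_sub : ∂^[s-1] G ⊆ (range n).powersetCard j := by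
      intro C hC
      rw [mem_shadow_iterate_iff_exists_mem_card_add] at hC
      obtain ⟨E, hE, hCE, hcard⟩ := hC
      rw [mem_powersetCard]
      obtain ⟨hE1, hE2⟩ := hGu E hE
      exact ⟨hCE.trans hE1, by omega⟩
    have hdisj : Disjoint (∂^[s-1] G) (L j) := by
      rw [disjoint_left]
      intro C hC hCL
      rw [mem_shadow_iterate_iff_exists_mem_card_add] at hC
      obtain ⟨E, hE, hCE, hcard⟩ := hC
      rw [hG, mem_image] at hE
      obtain ⟨A, hA, rfl⟩ := hE
      have hCB : C ∈ ℬ := ((hLmem _ _).1 hCL).1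
      have hAB : A ∈ ℬ := ((hLmem _ _).1 hA).1
      have hdisjCA : Disjoint C A := by
        refine disjoint_left.2 fun z hzC hzA => ?_
        have := hCE hzC
        rw [mem_sdiff] at this
        exact this.2 hzA
      have := hdB C hCB A hAB
      rw [symmDiff_of_disjoint hdisjCA, card_union_of_disjoint hdisjCA] at this
      have hCj : #C = j := ((hLmem _ _).1 hCL).2
      have hAi : #A = i := (hiu A hA).1
      omega
    have hcup : #(∂^[s-1] G ∪ L j) = #(∂^[s-1] G) + #(L j) := card_union_of_disjoint hdisj
    have h1 : #(∂^[s-1] G ∪ L j) ≤ #((range n).powersetCard j) :=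
      card_le_card (union_subset hshadow_sub (hLsub j))
    rw [card_powersetCard, card_range] at h1
    have h2 := hkatona
    rw [hGcard] at h2
    omega
  -- final summation
  have hsplit : #ℬ = ∑ i ∈ range (k+1), #(L i) + ∑ i ∈ Ico (k+1) (2*k+1), #(L i) := by
    rw [hpartition, range_eq_Ico,
      ← Finset.sum_Ico_consecutive (fun i => #(L i)) (by omega : 0 ≤ k+1)
        (by omega : k+1 ≤ 2*k+1), ← range_eq_Ico]
  have hS2 : ∑ i ∈ Ico (k+1) (2*k+1), #(L i) = ∑ i ∈ range k, #(L (k+1+i)) := by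
    rw [Finset.sum_Ico_eq_sum_range]
    have he : 2*k+1-(k+1) = k := by omega
    rw [he]
  have hS1 : ∑ i ∈ range (k+1), #(L i) = #(L 0) + ∑ i ∈ range k, #(L (i+1)) := by
    rw [Finset.sum_range_succ' (fun i => #(L i)) k]
    exact add_comm _ _
  have hreflect : ∑ i ∈ range k, #(L (i+1)) = ∑ i ∈ range k, #(L (k-i)) := by
    rw [← Finset.sum_range_reflect (fun i => #(L (i+1))) k]
    apply Finset.sum_congr rfl
    intro i hi
    rw [mem_range] at hi
    have he : k-1-i+1 = k-i := by omega
    rw [he]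
  have hchoose : ∑ i ∈ range (k+1), n.choose i = 1 + ∑ i ∈ range k, n.choose (k-i) := by
    rw [Finset.sum_range_succ' (fun i => n.choose i) k]
    rw [← Finset.sum_range_reflect (fun i => n.choose (i+1)) k]
    have : ∀ i ∈ range k, n.choose (k-1-i+1) = n.choose (k-i) := by
      intro i hi
      rw [mem_range] at hi
      have he : k-1-i+1 = k-i := by omega
      rw [he]
    rw [Finset.sum_congr rfl this]
    rw [Nat.choose_zero_right]
    exact add_comm _ _
  have hL0 : #(L 0) ≤ 1 := by
    refine card_le_one.2 fun A hA B hB => ?_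
    have hA' := (mem_filter.1 (hL ▸ hA)).2
    have hB' := (mem_filter.1 (hL ▸ hB)).2
    rw [card_eq_zero] at hA' hB'
    rw [hA', hB']
  have hpairs : ∑ i ∈ range k, (#(L (k-i)) + #(L (k+1+i))) ≤ ∑ i ∈ range k, n.choose (k-i) := by
    refine Finset.sum_le_sum fun i hi => ?_
    rw [mem_range] at hi
    have := hpair (k+1+i) (by omega) (by omega)
    have hj : 2*k+1-(k+1+i) = k-i := by omega
    rw [hj] at this
    omega
  rw [hsplit, hS1, hS2, hreflect, hchoose]
  rw [Finset.sum_add_distrib] at hpairs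
  omega




variable {m : ℕ}

/-- support of a boolean vector, as a Finset of Fin m -/
def supp (x : Fin m → Bool) : Finset (Fin m) := univ.filter (fun i => x i = true)

def toSet (x : Fin m → Bool) : Finset ℕ := (supp x).image Fin.val

lemma mem_supp {x : Fin m → Bool} {i : Fin m} : i ∈ supp x ↔ x i = true := by
  simp [supp]

lemma supp_injective : Function.Injective (supp (m := m)) := by
  intro x y h
  funext i
  have := congrArg (i ∈ ·) h
  simp only [mem_supp, eq_iff_iff] at this
  cases hx : x i <;> cases hy : y i <;> simp [hx, hy] at this ⊢ <;> tauto

lemma toSet_injective : Function.Injective (toSet (m := m)) := by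
  intro x y h
  exact supp_injective (Finset.image_injective Fin.val_injective h)

lemma toSet_subset (x : Fin m → Bool) : toSet x ⊆ range m := by
  intro z hz
  simp only [toSet, mem_image] at hz
  obtain ⟨i, -, rfl⟩ := hz
  exact mem_range.2 i.isLt

lemma supp_symmDiff (x y : Fin m → Bool) :
    symmDiff (supp x) (supp y) = univ.filter (fun i => x i ≠ y i) := by
  ext i
  simp only [mem_symmDiff, mem_supp, mem_filter, mem_univ, true_and]
  cases hx : x i <;> cases hy : y i <;> simp

lemma hamming_toSet (x y : Fin m → Bool) :
    hammingDist x y = #(symmDiff (toSet x) (toSet y)) := by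
  have himg : symmDiff (toSet x) (toSet y) = (symmDiff (supp x) (supp y)).image Fin.val := by
    rw [toSet, toSet, ← image_symmDiff _ _ Fin.val_injective]
  rw [himg, card_image_of_injective _ Fin.val_injective, supp_symmDiff]
  rfl




variable {m : ℕ}

lemma hamming_zero (x : Fin m → Bool) : hammingDist x (fun _ => false) = #(supp x) := by
  unfold hammingDist supp
  congr 1
  apply filter_congr
  intro i _
  simp

lemma card_small_sets (m k : ℕ) :
    #(univ.filter (fun A : Finset (Fin m) => #A ≤ k)) = ∑ i ∈ range (k+1), m.choose i := by
  classical
  rw [card_eq_sum_card_fiberwise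
    (f := fun A : Finset (Fin m) => #A) (t := range (k+1))
    (fun A hA => mem_range.2 (by simp only; have := (mem_filter.1 hA).2; omega))]
  refine Finset.sum_congr rfl fun i hi => ?_
  rw [mem_range] at hi
  have : {A ∈ univ.filter (fun A : Finset (Fin m) => #A ≤ k) | #A = i}
      = univ.powersetCard i := by
    ext A
    simp only [mem_filter, mem_univ, true_and, mem_powersetCard, subset_univ]
    constructor
    · rintro ⟨-, h⟩; exact h
    · intro h
      exact ⟨by omega, h⟩
  rw [this, card_powersetCard, card_univ, Fintype.card_fin]

def ball0 (m k : ℕ) : Finset (Fin m → Bool) :=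
  univ.filter (fun x => hammingDist x (fun _ => false) ≤ k)

lemma ball0_card (m k : ℕ) : #(ball0 m k) = ∑ i ∈ range (k+1), m.choose i := by
  classical
  rw [← card_small_sets m k]
  have himg : (ball0 m k).image supp = univ.filter (fun A : Finset (Fin m) => #A ≤ k) := by
    ext A
    simp only [mem_image, ball0, mem_filter, mem_univ, true_and]
    constructor
    · rintro ⟨x, hx, rfl⟩
      rwa [hamming_zero] at hx
    · intro hA
      refine ⟨fun i => decide (i ∈ A), ?_, ?_⟩
      · rw [hamming_zero]
        have : supp (fun i => decide (i ∈ A)) = A := by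
          ext i; simp [mem_supp]
        rwa [this]
      · ext i; simp [mem_supp]
  rw [← himg, card_image_of_injOn (supp_injective.injOn)]

lemma ball0_dist {m k : ℕ} {x y : Fin m → Bool} (hx : x ∈ ball0 m k) (hy : y ∈ ball0 m k) :
    hammingDist x y ≤ 2*k := by
  rw [ball0, mem_filter] at hx hy
  have h1 := hammingDist_triangle x (fun _ => false) y
  have h2 : hammingDist (fun _ => false) y = hammingDist y (fun _ => false) :=
    hammingDist_comm _ _
  omega

lemma kleitman_vectors (m t : ℕ) (ht : 1 ≤ t) (htm : 2*t ≤ m) (hme : Even m)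
    (s : Finset (Fin m → Bool)) (hs : ∀ x ∈ s, ∀ y ∈ s, hammingDist x y ≤ m - 2*t) :
    s.card ≤ ∑ i ∈ range (m/2 - t + 1), m.choose i := by
  classical
  obtain ⟨r, hr⟩ := hme
  have hdiv : m / 2 = r := by omega
  set k := m/2 - t with hk
  have h2k : m - 2*t = 2*k := by omega
  have hcard : #(s.image toSet) = #s := card_image_of_injOn (toSet_injective.injOn)
  rw [← hcard]
  refine kleitman_family m k (by omega) _ ?_ ?_
  · intro A hA
    rw [mem_image] at hA
    obtain ⟨x, -, rfl⟩ := hA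
    exact toSet_subset x
  · intro A hA B hB
    rw [mem_image] at hA hB
    obtain ⟨x, hx, rfl⟩ := hA
    obtain ⟨y, hy, rfl⟩ := hB
    rw [← hamming_toSet]
    have := hs x hx y hy
    omega



end KleitmanProof

/-- For `m` even and `2t ≤ m`, the independence number of `G_{m,t}` is
`∑_{i=0}^{m/2-t} C(m,i)`; equivalently (Kleitman), this is the maximum cardinality of a
set of binary vectors of length `m` with pairwise Hamming distances at most `m - 2t`. -/
theorem cubeGraph_indepNum (m t : ℕ) (hm : 0 < m) (ht : 0 < t)
    (hme : Even m) (htm : 2 * t ≤ m) :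
    indepNum (cubeGraph m t) = ∑ i ∈ Finset.range (m / 2 - t + 1), m.choose i ∧
      IsGreatest
        {n | ∃ s : Finset (Fin m → Bool),
          (∀ x ∈ s, ∀ y ∈ s, hammingDist x y ≤ m - 2 * t) ∧ s.card = n}
        (∑ i ∈ Finset.range (m / 2 - t + 1), m.choose i) := by
  classical
  set B := ∑ i ∈ Finset.range (m / 2 - t + 1), m.choose i with hB
  set S : Set ℕ := {n | ∃ s : Finset (Fin m → Bool),
      (∀ x ∈ s, ∀ y ∈ s, hammingDist x y ≤ m - 2 * t) ∧ s.card = n} with hS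
  have hgreat : IsGreatest S B := by
    constructor
    · refine ⟨KleitmanProof.ball0 m (m/2 - t), ?_, ?_⟩
      · intro x hx y hy
        have hd := KleitmanProof.ball0_dist hx hy
        obtain ⟨r, hr⟩ := hme
        omega
      · exact KleitmanProof.ball0_card m (m/2 - t)
    · rintro nn ⟨s, hs, rfl⟩
      exact KleitmanProof.kleitman_vectors m t ht htm hme s hs
  have hsets : {n | ∃ s : Finset (Fin m → Bool),
      IsIndepF (cubeGraph m t) s ∧ s.card = n} = S := by
    ext nn
    constructor
    · rintro ⟨s, hind, rfl⟩
      refine ⟨s, ?_, rfl⟩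
      intro x hx y hy
      by_cases hxy : x = y
      · subst hxy
        rw [hammingDist_self]
        omega
      · have hadj : ¬ (cubeGraph m t).Adj x y := hind x hx y hy
        have hadj' : ¬ (x ≠ y ∧ m - 2*t < hammingDist x y) := hadj
        by_contra hc
        exact hadj' ⟨hxy, by omega⟩
    · rintro ⟨s, hdist, rfl⟩
      refine ⟨s, ?_, rfl⟩
      intro x hx y hy hadj
      obtain ⟨hne, hlt⟩ := hadj
      exact absurd (hdist x hx y hy) (not_le.2 hlt)
  constructor
  · show sSup {n | ∃ s : Finset (Fin m → Bool),
      IsIndepF (cubeGraph m t) s ∧ s.card = n} = B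
    rw [hsets]
    exact hgreat.csSup_eq
  · exact hgreat
end

section
/- Let m and t be positive integers with m even and 2t ≤ m. Every covering code of radius m/2 − t in {0,1}^m has cardinality at least 2t. -/
namespace CoveringCodeAuxBF

open Finset

noncomputable section

def sgnv {m : ℕ} (c : Fin m → Bool) (i : Fin m) : ℝ := if c i then 1 else -1

lemma abs_sgnv {m : ℕ} (c : Fin m → Bool) (i : Fin m) : |sgnv c i| = 1 := by
  unfold sgnv; split <;> norm_num

lemma exists_kernel {m : ℕ} (C : Finset (Fin m → Bool)) (F : Finset (Fin m))
    (h : C.card < F.card) :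
    ∃ d : Fin m → ℝ, d ≠ 0 ∧ (∀ i, i ∉ F → d i = 0) ∧
      ∀ c ∈ C, ∑ i, d i * sgnv c i = 0 := by
  classical
  set A : Matrix {c // c ∈ C} {i // i ∈ F} ℝ := fun c i => sgnv c.1 i.1 with hA
  have hni : ¬ Function.Injective A.mulVecLin := by
    intro hinj
    have h2 := LinearMap.finrank_le_finrank_of_injective hinj
    rw [Module.finrank_fintype_fun_eq_card, Module.finrank_fintype_fun_eq_card] at h2
    simp only [Fintype.card_coe] at h2
    omega
  rw [Function.not_injective_iff] at hni
  obtain ⟨z, w, hzw, hne⟩ := hni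
  have hker : A.mulVec (z - w) = 0 := by
    have h3 : A.mulVecLin (z - w) = 0 := by
      rw [map_sub, hzw, sub_self]
    simpa using h3
  have hd0 : z - w ≠ 0 := sub_ne_zero_of_ne hne
  refine ⟨fun i => if h : i ∈ F then (z - w) ⟨i, h⟩ else 0, ?_, ?_, ?_⟩
  · obtain ⟨j, hj⟩ := Function.ne_iff.mp hd0
    intro hcon
    apply hj
    have := congrFun hcon j.1
    simpa [j.2] using this
  · intro i hi; simp [hi]
  · intro c hc
    have hzero : ∀ i ∈ (univ : Finset (Fin m)), i ∉ F →
        (if h : i ∈ F then (z - w) ⟨i, h⟩ else 0) * sgnv c i = 0 := by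
      intro i _ hi; simp [hi]
    rw [← Finset.sum_subset (Finset.subset_univ F) hzero]
    have hsum : ∑ i ∈ F, (if h : i ∈ F then (z - w) ⟨i, h⟩ else 0) * sgnv c i
        = ∑ i : {i // i ∈ F}, (z - w) i * sgnv c i.1 := by
      rw [← Finset.sum_attach F]
      apply Finset.sum_congr rfl
      intro i _
      simp [i.2]
    rw [hsum]
    have := congrFun hker ⟨c, hc⟩
    simpa [Matrix.mulVec, dotProduct, hA, mul_comm] using this


lemma round_aux {m : ℕ} (C : Finset (Fin m → Bool)) :
    ∀ (n : ℕ) (F : Finset (Fin m)) (x : Fin m → ℝ), F.card ≤ n →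
    (∀ i, |x i| ≤ 1) → (∀ i, i ∉ F → x i = 1 ∨ x i = -1) →
    (∀ c ∈ C, ∑ i, x i * sgnv c i = 0) →
    ∃ (G : Finset (Fin m)) (y : Fin m → ℝ), G.card ≤ C.card ∧ (∀ i, |y i| ≤ 1) ∧
      (∀ i, i ∉ G → y i = 1 ∨ y i = -1) ∧ (∀ c ∈ C, ∑ i, y i * sgnv c i = 0) := by
  intro n
  induction n with
  | zero =>
    intro F x hFn hb hpm hsum
    exact ⟨F, x, by omega, hb, hpm, hsum⟩
  | succ n ih =>
    intro F x hFn hb hpm hsum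
    by_cases hle : F.card ≤ C.card
    · exact ⟨F, x, hle, hb, hpm, hsum⟩
    · obtain ⟨d, hd0, hdF, hdsum⟩ := exists_kernel C F (lt_of_not_ge hle)
      have hlamf : ∀ i : Fin m, ∃ l : ℝ, (0 < d i → l = (1 - x i) / d i) ∧
          (d i < 0 → l = (-1 - x i) / d i) := by
        intro i
        by_cases h : 0 < d i
        · exact ⟨(1 - x i) / d i, fun _ => rfl, fun hn => absurd h (not_lt.mpr hn.le)⟩
        · exact ⟨(-1 - x i) / d i, fun hp => absurd hp h, fun _ => rfl⟩
      choose lamf hlamfp hlamfn using hlamf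
      set T := F.filter (fun i => d i ≠ 0) with hT
      have hTne : T.Nonempty := by
        obtain ⟨j, hj⟩ := Function.ne_iff.mp hd0
        refine ⟨j, ?_⟩
        rw [hT, mem_filter]
        refine ⟨?_, hj⟩
        by_contra hjF
        exact hj (hdF j hjF)
      have hmemT : ∀ i ∈ T, d i ≠ 0 := fun i hi => (mem_filter.mp hi).2
      have hlamf_nonneg : ∀ i ∈ T, 0 ≤ lamf i := by
        intro i hi
        have hxi := abs_le.mp (hb i)
        rcases lt_or_gt_of_ne (hmemT i hi) with hneg | hpos
        · rw [hlamfn i hneg]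
          exact div_nonneg_iff.mpr (Or.inr ⟨by linarith [hxi.1], hneg.le⟩)
        · rw [hlamfp i hpos]
          exact div_nonneg (by linarith [hxi.2]) hpos.le
      set lam := T.inf' hTne lamf with hlam
      have hlam_nonneg : 0 ≤ lam := Finset.le_inf' hTne lamf hlamf_nonneg
      set y : Fin m → ℝ := fun i => x i + lam * d i with hy
      have hybound : ∀ i, |y i| ≤ 1 := by
        intro i
        by_cases hdi : d i = 0
        · simpa [hy, hdi] using hb i
        · have hiT : i ∈ T := by
            rw [hT, mem_filter]
            refine ⟨?_, hdi⟩
            by_contra hiF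
            exact hdi (hdF i hiF)
          have hle' : lam ≤ lamf i := Finset.inf'_le lamf hiT
          have hxi := abs_le.mp (hb i)
          rcases lt_or_gt_of_ne hdi with hneg | hpos
          · have h1 : lamf i * d i ≤ lam * d i :=
              mul_le_mul_of_nonpos_right hle' hneg.le
            rw [hlamfn i hneg, div_mul_cancel₀ _ hdi] at h1
            have h2 : lam * d i ≤ 0 := mul_nonpos_of_nonneg_of_nonpos hlam_nonneg hneg.le
            rw [hy, abs_le]
            constructor <;> simp only <;> linarith [hxi.1, hxi.2]
          · have h1 : lam * d i ≤ lamf i * d i :=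
              mul_le_mul_of_nonneg_right hle' hpos.le
            rw [hlamfp i hpos, div_mul_cancel₀ _ hdi] at h1
            have h2 : 0 ≤ lam * d i := mul_nonneg hlam_nonneg hpos.le
            rw [hy, abs_le]
            constructor <;> simp only <;> linarith [hxi.1, hxi.2]
      obtain ⟨i₁, hi₁T, hlam_eq⟩ := Finset.exists_mem_eq_inf' hTne lamf
      have hi₁F : i₁ ∈ F := (mem_filter.mp hi₁T).1
      have hdi₁ : d i₁ ≠ 0 := hmemT i₁ hi₁T
      have hlam_eq' : lam = lamf i₁ := hlam_eq
      have hyi₁ : y i₁ = 1 ∨ y i₁ = -1 := by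
        rcases lt_or_gt_of_ne hdi₁ with hneg | hpos
        · right
          rw [hy]
          simp only
          rw [hlam_eq', hlamfn i₁ hneg, div_mul_cancel₀ _ hdi₁]
          ring
        · left
          rw [hy]
          simp only
          rw [hlam_eq', hlamfp i₁ hpos, div_mul_cancel₀ _ hdi₁]
          ring
      have hpm' : ∀ i, i ∉ F.erase i₁ → y i = 1 ∨ y i = -1 := by
        intro i hi
        by_cases heq : i = i₁
        · subst heq; exact hyi₁
        · have hiF : i ∉ F := fun hiF => hi (Finset.mem_erase.mpr ⟨heq, hiF⟩)
          have : y i = x i := by rw [hy]; simp [hdF i hiF]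
          rw [this]
          exact hpm i hiF
      have hsum' : ∀ c ∈ C, ∑ i, y i * sgnv c i = 0 := by
        intro c hc
        have : ∑ i, y i * sgnv c i
            = (∑ i, x i * sgnv c i) + lam * ∑ i, d i * sgnv c i := by
          rw [Finset.mul_sum, ← Finset.sum_add_distrib]
          apply Finset.sum_congr rfl
          intro i _
          rw [hy]
          ring
        rw [this, hsum c hc, hdsum c hc, mul_zero, add_zero]
      have hcard : (F.erase i₁).card ≤ n := by
        rw [Finset.card_erase_of_mem hi₁F]
        omega
      exact ih (F.erase i₁) y hcard hybound hpm' hsum'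


end

end CoveringCodeAuxBF

open Finset CoveringCodeAuxBF in
/-- Every covering code of radius `m/2 - t` in `{0,1}^m` (with `m` even, `2t ≤ m`)
has cardinality at least `2t`. -/
theorem coveringCode_lower_bound_weak (m t : ℕ) (hm : 0 < m) (ht : 0 < t)
    (hme : Even m) (htm : 2 * t ≤ m) (C : Finset (Fin m → Bool))
    (hC : ∀ x : Fin m → Bool, ∃ c ∈ C, hammingDist x c ≤ m / 2 - t) :
    2 * t ≤ C.card := by
  classical
  obtain ⟨G, y, hGcard, hyb, hypm, hysum⟩ :=
    round_aux C m Finset.univ (fun _ => 0)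
      (by simp) (by norm_num) (by intro i hi; simp at hi) (by intro c hc; simp)
  set b : Fin m → Bool := fun i => decide (0 ≤ y i) with hbdef
  -- the rounded vector agrees with sgnv b
  have hround : ∀ i, i ∉ G → sgnv b i = y i := by
    intro i hi
    rcases hypm i hi with h1 | h1 <;>
      simp [sgnv, hbdef, h1]
  have hclose : ∀ i, |sgnv b i - y i| ≤ if i ∈ G then 1 else 0 := by
    intro i
    by_cases hi : i ∈ G
    · simp only [if_pos hi]
      have := abs_le.mp (hyb i)
      by_cases h0 : 0 ≤ y i
      · rw [show sgnv b i = 1 by simp [sgnv, hbdef, h0]]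
        rw [abs_le]; constructor <;> linarith [this.1, this.2]
      · rw [show sgnv b i = -1 by simp [sgnv, hbdef, h0]]
        rw [abs_le]; constructor <;> linarith [this.1, this.2]
    · simp only [if_neg hi]
      rw [hround i hi]
      simp
  -- key upper bound
  have key1 : ∀ c ∈ C, ∑ i, sgnv b i * sgnv c i ≤ (C.card : ℝ) := by
    intro c hc
    have e1 : ∑ i, sgnv b i * sgnv c i = ∑ i, (sgnv b i - y i) * sgnv c i := by
      rw [show (∑ i, (sgnv b i - y i) * sgnv c i)
          = ∑ i, sgnv b i * sgnv c i - ∑ i, y i * sgnv c i by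
        rw [← Finset.sum_sub_distrib]; apply Finset.sum_congr rfl; intros; ring]
      rw [hysum c hc, sub_zero]
    rw [e1]
    calc ∑ i, (sgnv b i - y i) * sgnv c i
        ≤ ∑ i, |(sgnv b i - y i) * sgnv c i| :=
          Finset.sum_le_sum fun i _ => le_abs_self _
      _ = ∑ i, |sgnv b i - y i| := by
          apply Finset.sum_congr rfl; intro i _
          rw [abs_mul, abs_sgnv, mul_one]
      _ ≤ ∑ i, (if i ∈ G then (1:ℝ) else 0) :=
          Finset.sum_le_sum fun i _ => hclose i
      _ = (G.card : ℝ) := by simp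
      _ ≤ (C.card : ℝ) := by exact_mod_cast hGcard
  -- relation to hamming distance
  have key2 : ∀ c : Fin m → Bool,
      ∑ i, sgnv b i * sgnv c i = (m : ℝ) - 2 * (hammingDist b c : ℝ) := by
    intro c
    have e : ∀ i, sgnv b i * sgnv c i
        = 1 - 2 * (if b i ≠ c i then (1:ℝ) else 0) := by
      intro i
      cases hbi : b i <;> cases hci : c i <;> simp [sgnv, hbi, hci] <;> norm_num
    rw [Finset.sum_congr rfl fun i _ => e i]
    rw [Finset.sum_sub_distrib]
    simp only [Finset.sum_const, card_univ, Fintype.card_fin, nsmul_eq_mul, mul_one]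
    rw [← Finset.mul_sum]
    congr 1
    rw [Finset.sum_boole]
    simp [hammingDist]
  -- finish
  obtain ⟨c₀, hc₀C, hc₀d⟩ := hC b
  have hnat : 2 * hammingDist b c₀ + 2 * t ≤ m := by
    obtain ⟨r, hr⟩ := hme
    omega
  have hcast : ((2 * hammingDist b c₀ + 2 * t : ℕ) : ℝ) ≤ (m : ℝ) :=
    Nat.cast_le.mpr hnat
  push_cast at hcast
  have h1 := key1 c₀ hc₀C
  rw [key2 c₀] at h1
  have h2 : ((2 * t : ℕ) : ℝ) ≤ (C.card : ℝ) := by push_cast; linarith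
  exact_mod_cast h2
end

section
/- There exists an absolute constant C > 0 such that for all positive integers m and t with m even and 4t^2 ≤ m, there exists a covering code of radius m/2 − t in {0,1}^m of cardinality at most C·t^2. -/
open Finset


private def eps (b : Bool) : ℤ := if b then -1 else 1

private lemma eps_mul (b1 b2 : Bool) : eps b1 * eps b2 = eps (b1 != b2) := by
  cases b1 <;> cases b2 <;> simp [eps]

private def chi {c : ℕ} (a u : Fin c → Bool) : ℤ := ∏ i, eps (a i && u i)

private lemma chi_mul {c : ℕ} (a u v : Fin c → Bool) :
    chi a u * chi a v = chi a (fun i => u i != v i) := by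
  unfold chi
  rw [← Finset.prod_mul_distrib]
  refine Finset.prod_congr rfl fun i _ => ?_
  rw [eps_mul]
  have h : (fun j => u j != v j) i = (u i != v i) := rfl
  rw [h]
  congr 1
  cases a i <;> cases u i <;> cases v i <;> decide

private lemma chi_one_or {c : ℕ} (a u : Fin c → Bool) : chi a u = 1 ∨ chi a u = -1 := by
  have hmul : chi a u * chi a u = 1 := by
    rw [chi_mul]
    unfold chi
    have : ∀ i : Fin c, eps (a i && ((fun j => u j != u j) i)) = 1 := by
      intro i; simp [eps]
    simp only [this, Finset.prod_const_one]
  exact Int.isUnit_iff.mp (IsUnit.of_mul_eq_one _ hmul)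

private lemma sum_chi {c : ℕ} (u : Fin c → Bool) :
    ∑ a : Fin c → Bool, chi a u = if u = fun _ => false then (2^c : ℤ) else 0 := by
  have h : ∑ a : Fin c → Bool, chi a u = ∏ i : Fin c, ∑ b : Bool, eps (b && u i) := by
    rw [Finset.prod_univ_sum,
      show (Fintype.piFinset fun _ : Fin c => (Finset.univ : Finset Bool)) = Finset.univ from
        Fintype.piFinset_univ]
    rfl
  rw [h]
  by_cases hu : u = fun _ => false
  · subst hu
    simp [eps]
  · have : ∃ i, u i = true := by
      by_contra hc
      push_neg at hc
      exact hu (funext fun i => by simpa using hc i)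
    obtain ⟨i, hi⟩ := this
    rw [if_neg hu]
    refine Finset.prod_eq_zero (Finset.mem_univ i) ?_
    simp [hi, eps]

private lemma sum_chi_mul {c : ℕ} (u v : Fin c → Bool) :
    ∑ a : Fin c → Bool, chi a u * chi a v = if u = v then (2^c : ℤ) else 0 := by
  rw [Finset.sum_congr rfl fun a _ => chi_mul a u v, sum_chi]
  congr 1
  simp only [eq_iff_iff]
  constructor
  · intro he
    funext i
    have := congrFun he i
    simpa using this
  · intro he; subst he; funext i; simp
private lemma hamming_filter {m : ℕ} (x y : Fin m → Bool) :
    hammingDist x y = (Finset.univ.filter fun i => x i ≠ y i).card := by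
  simp [hammingDist, Fintype.card_subtype]

private lemma sum_eps_eq {m : ℕ} (x y : Fin m → Bool) :
    ∑ i, eps (x i != y i) = (m : ℤ) - 2 * hammingDist x y := by
  have h1 : ∀ i : Fin m, eps (x i != y i) = 1 - 2 * (if x i ≠ y i then (1:ℤ) else 0) := by
    intro i; by_cases h : x i = y i <;> simp [eps, h]
  rw [Finset.sum_congr rfl fun i _ => h1 i, Finset.sum_sub_distrib, Finset.sum_const,
    ← Finset.mul_sum, Finset.sum_ite, Finset.sum_const, Finset.sum_const, hamming_filter]
  simp

private lemma hamming_compl {m : ℕ} (x y : Fin m → Bool) :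
    hammingDist x y + hammingDist x (fun i => !(y i)) = m := by
  rw [hamming_filter, hamming_filter]
  have h : (Finset.univ.filter fun i => x i ≠ !(y i)) =
      (Finset.univ.filter fun i => ¬ (x i ≠ y i)) := by
    apply Finset.filter_congr
    intro i _
    cases x i <;> cases y i <;> simp
  rw [h, Finset.card_filter_add_card_filter_not]
  simp
private lemma sum_sq_F {c n m : ℕ} (e : Fin n ↪ (Fin c → Bool)) (g : Fin m → Fin n)
    (w : Fin m → ℤ) :
    ∑ a : Fin c → Bool, (∑ i, w i * chi a (e (g i))) ^ 2
      = 2 ^ c * ∑ j, (∑ i ∈ Finset.univ.filter (fun i => g i = j), w i) ^ 2 := by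
  set s : Fin n → ℤ := fun j => ∑ i ∈ Finset.univ.filter (fun i => g i = j), w i with hs
  calc ∑ a : Fin c → Bool, (∑ i, w i * chi a (e (g i))) ^ 2
      = ∑ a : Fin c → Bool, ∑ i, ∑ i',
          (w i * w i') * (chi a (e (g i)) * chi a (e (g i'))) := by
        refine Finset.sum_congr rfl fun a _ => ?_
        rw [sq, Finset.sum_mul_sum]
        exact Finset.sum_congr rfl fun i _ => Finset.sum_congr rfl fun i' _ => by ring
    _ = ∑ i, ∑ i', (w i * w i') * ∑ a : Fin c → Bool,
          chi a (e (g i)) * chi a (e (g i')) := by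
        rw [Finset.sum_comm]
        refine Finset.sum_congr rfl fun i _ => ?_
        rw [Finset.sum_comm]
        exact Finset.sum_congr rfl fun i' _ => (Finset.mul_sum _ _ _).symm
    _ = ∑ i, ∑ i', if g i' = g i then 2 ^ c * (w i * w i') else 0 := by
        refine Finset.sum_congr rfl fun i _ => Finset.sum_congr rfl fun i' _ => ?_
        rw [sum_chi_mul]
        by_cases h : g i' = g i
        · rw [if_pos h, if_pos (by rw [h])]; ring
        · rw [if_neg h, if_neg (fun hc => h ((e.injective hc).symm))]; ring
    _ = ∑ i, 2 ^ c * (w i * s (g i)) := by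
        refine Finset.sum_congr rfl fun i _ => ?_
        rw [← Finset.sum_filter, ← Finset.mul_sum, ← Finset.mul_sum]
    _ = 2 ^ c * ∑ j, (s j) ^ 2 := by
        rw [← Finset.mul_sum]
        congr 1
        rw [← Finset.sum_fiberwise Finset.univ g (fun i => w i * s (g i))]
        refine Finset.sum_congr rfl fun j _ => ?_
        have hfix : ∀ i ∈ Finset.univ.filter (fun i => g i = j), w i * s (g i) = w i * s j := by
          intro i hi; rw [(Finset.mem_filter.mp hi).2]
        rw [Finset.sum_congr rfl hfix, ← Finset.sum_mul, sq]

/-- There is an absolute constant `K > 0` so that for all `m` even and `4t² ≤ m` there is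
a covering code of radius `m/2 - t` in `{0,1}^m` of cardinality at most `K·t²`. -/
theorem coveringCode_upper_bound :
    ∃ K : ℝ, 0 < K ∧ ∀ m t : ℕ, 0 < m → 0 < t → Even m → 4 * t ^ 2 ≤ m →
      ∃ C : Finset (Fin m → Bool),
        (∀ x : Fin m → Bool, ∃ c ∈ C, hammingDist x c ≤ m / 2 - t) ∧
        (C.card : ℝ) ≤ K * t ^ 2 := by
  refine ⟨16, by norm_num, ?_⟩
  intro m t hm ht hmeven hmt
  set n : ℕ := 4 * t ^ 2 with hn
  have ht2 : 1 ≤ t ^ 2 := Nat.one_le_pow _ _ ht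
  have hn4 : 4 ≤ n := by omega
  have hnm : n ≤ m := hmt
  have hneven : n % 2 = 0 := by omega
  have hmeven' : m % 2 = 0 := Nat.even_iff.mp hmeven
  set c : ℕ := Nat.clog 2 n with hc
  -- the grouping map
  have hgbound : ∀ i : Fin m, min i.val (n - 1) < n := fun i => by omega
  set g : Fin m → Fin n := fun i => ⟨min i.val (n - 1), hgbound i⟩ with hg
  -- embedding of groups into characters
  obtain ⟨e⟩ : Nonempty (Fin n ↪ (Fin c → Bool)) := by
    refine Function.Embedding.nonempty_of_card_le ?_
    simp only [Fintype.card_fin, Fintype.card_fun, Fintype.card_bool]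
    exact Nat.le_pow_clog one_lt_two n
  -- codewords
  set cod : (Fin c → Bool) → Bool → (Fin m → Bool) :=
    fun a b i => xor b (decide (chi a (e (g i)) = -1)) with hcod
  refine ⟨Finset.image (fun p : (Fin c → Bool) × Bool => cod p.1 p.2) Finset.univ, ?_, ?_⟩
  · -- covering property
    intro x
    set s : Fin n → ℤ := fun j => ∑ i ∈ Finset.univ.filter (fun i => g i = j), eps (x i)
      with hs
    set F : (Fin c → Bool) → ℤ := fun a => ∑ i, eps (x i) * chi a (e (g i)) with hF
    -- F a = m - 2 * dist(x, cod a false)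
    have heps_cod : ∀ a (i : Fin m), eps (cod a false i) = chi a (e (g i)) := by
      intro a i
      rcases chi_one_or a (e (g i)) with h | h <;> simp [hcod, eps, h]
    have hFdist : ∀ a, F a = (m : ℤ) - 2 * hammingDist x (cod a false) := by
      intro a
      rw [← sum_eps_eq x (cod a false)]
      refine Finset.sum_congr rfl fun i _ => ?_
      rw [show eps (x i != cod a false i) = eps (x i) * eps (cod a false i) from by
        cases (x i) <;> cases (cod a false i) <;> simp [eps], heps_cod]
    -- odd fibers
    have hfib : ∀ j : Fin n, Odd (Finset.univ.filter fun i : Fin m => g i = j).card := by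
      have hsingle : ∀ j : Fin n, j.val < n - 1 →
          (Finset.univ.filter fun i : Fin m => g i = j) = {⟨j.val, by omega⟩} := by
        intro j hj
        ext i
        simp only [Finset.mem_filter, Finset.mem_univ, true_and, Finset.mem_singleton, hg,
          Fin.ext_iff]
        omega
      set jn : Fin n := ⟨n - 1, by omega⟩ with hjn
      have hsum : m = ∑ j : Fin n, (Finset.univ.filter fun i : Fin m => g i = j).card := by
        have := Finset.card_eq_sum_card_fiberwise
          (f := g) (s := Finset.univ) (t := Finset.univ) (fun x _ => Finset.mem_univ _)
        simpa using this
      have hsplit : ∑ j : Fin n, (Finset.univ.filter fun i : Fin m => g i = j).card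
          = (Finset.univ.filter fun i : Fin m => g i = jn).card
            + ∑ j ∈ Finset.univ.erase jn,
                (Finset.univ.filter fun i : Fin m => g i = j).card := by
        rw [← Finset.add_sum_erase _ _ (Finset.mem_univ jn)]
      have herase : ∀ j ∈ Finset.univ.erase jn,
          (Finset.univ.filter fun i : Fin m => g i = j).card = 1 := by
        intro j hj
        have hjne : j ≠ jn := (Finset.mem_erase.mp hj).1
        have hjlt : j.val < n - 1 := by
          have := j.isLt
          rcases Nat.lt_or_ge j.val (n - 1) with h | h
          · exact h
          · exfalso; exact hjne (Fin.ext (show j.val = n - 1 by omega))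
        rw [hsingle j hjlt, Finset.card_singleton]
      have hsum2 : ∑ j ∈ Finset.univ.erase jn,
          (Finset.univ.filter fun i : Fin m => g i = j).card = n - 1 := by
        rw [Finset.sum_congr rfl herase, Finset.sum_const, smul_eq_mul, mul_one,
          Finset.card_erase_of_mem (Finset.mem_univ _), Finset.card_univ, Fintype.card_fin]
      intro j
      rcases Nat.lt_or_ge j.val (n - 1) with h | h
      · rw [hsingle j h, Finset.card_singleton]; exact odd_one
      · have hlt := j.isLt
        have hj : j = jn := Fin.ext (show j.val = n - 1 by omega)
        subst hj
        have : (Finset.univ.filter fun i : Fin m => g i = jn).card = m - (n - 1) := by omega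
        rw [this, Nat.odd_iff]
        omega
    -- s j is odd hence s j ^ 2 ≥ 1
    have hs1 : ∀ j : Fin n, 1 ≤ (s j) ^ 2 := by
      intro j
      have hmod : s j % 2 = 1 := by
        rw [hs]
        rw [Finset.sum_int_mod]
        have : ∀ i ∈ Finset.univ.filter (fun i : Fin m => g i = j), eps (x i) % 2 = 1 := by
          intro i _; cases (x i) <;> simp [eps]
        rw [Finset.sum_congr rfl this, Finset.sum_const]
        obtain ⟨k, hk⟩ := hfib j
        rw [hk, nsmul_eq_mul]
        push_cast
        omega
      have : 1 ≤ s j ∨ s j ≤ -1 := by omega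
      rcases this with h | h <;> nlinarith
    -- sum of squares identity
    have hSS : ∑ a : Fin c → Bool, (F a) ^ 2 = 2 ^ c * ∑ j, (s j) ^ 2 :=
      sum_sq_F e g (fun i => eps (x i))
    -- existence of a good character
    have hex : ∃ a : Fin c → Bool, (n : ℤ) ≤ (F a) ^ 2 := by
      by_contra hcon
      push_neg at hcon
      have hle : ∑ a : Fin c → Bool, (F a) ^ 2 ≤ (2 ^ c : ℤ) * ((n : ℤ) - 1) := by
        calc ∑ a : Fin c → Bool, (F a) ^ 2 ≤ ∑ _a : Fin c → Bool, ((n : ℤ) - 1) :=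
              Finset.sum_le_sum fun a _ => by have := hcon a; omega
          _ = (2 ^ c : ℤ) * ((n : ℤ) - 1) := by
              rw [Finset.sum_const]
              simp [Fintype.card_fun]
      have hge : (2 ^ c : ℤ) * (n : ℤ) ≤ ∑ a : Fin c → Bool, (F a) ^ 2 := by
        rw [hSS]
        have : (n : ℤ) ≤ ∑ j, (s j) ^ 2 := by
          calc (n : ℤ) = ∑ _j : Fin n, (1 : ℤ) := by simp
            _ ≤ ∑ j, (s j) ^ 2 := Finset.sum_le_sum fun j _ => hs1 j
        have h2c : (0 : ℤ) < 2 ^ c := by positivity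
        nlinarith
      have h2c : (0 : ℤ) < 2 ^ c := by positivity
      nlinarith
    obtain ⟨a, ha⟩ := hex
    -- |F a| ≥ 2t
    have habs : (2 * t : ℤ) ≤ F a ∨ F a ≤ -(2 * t : ℤ) := by
      by_contra hcon
      push_neg at hcon
      have h1 := hcon.1
      have h2 := hcon.2
      have : (n : ℤ) = 4 * (t : ℤ) ^ 2 := by rw [hn]; push_cast; ring
      nlinarith
    have hd0 : hammingDist x (cod a false) + hammingDist x (cod a true) = m := by
      have := hamming_compl x (cod a false)
      have hcc : (fun i => !(cod a false i)) = cod a true := by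
        funext i; simp [hcod]
      rwa [hcc] at this
    rcases habs with h | h
    · refine ⟨cod a false, Finset.mem_image.mpr ⟨(a, false), Finset.mem_univ _, rfl⟩, ?_⟩
      have := hFdist a
      have hdle : 2 * hammingDist x (cod a false) + 2 * t ≤ m := by
        have : (2 * (hammingDist x (cod a false) : ℤ) + 2 * t : ℤ) ≤ (m : ℤ) := by omega
        exact_mod_cast this
      omega
    · refine ⟨cod a true, Finset.mem_image.mpr ⟨(a, true), Finset.mem_univ _, rfl⟩, ?_⟩
      have := hFdist a
      have hdge : m + 2 * t ≤ 2 * hammingDist x (cod a false) := by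
        have : ((m : ℤ) + 2 * t : ℤ) ≤ 2 * (hammingDist x (cod a false) : ℤ) := by omega
        exact_mod_cast this
      omega
  · -- cardinality
    have hcard : (Finset.image (fun p : (Fin c → Bool) × Bool => cod p.1 p.2)
        Finset.univ).card ≤ 2 ^ c * 2 := by
      calc _ ≤ (Finset.univ : Finset ((Fin c → Bool) × Bool)).card := Finset.card_image_le
        _ = 2 ^ c * 2 := by simp [Fintype.card_fun]
    have hc1 : 1 ≤ c := Nat.clog_pos one_lt_two (by omega)
    have hclt : 2 ^ (c - 1) < n := Nat.pow_pred_clog_lt_self one_lt_two (by omega)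
    have h2c : 2 ^ c ≤ 2 * (n - 1) := by
      have : 2 ^ c = 2 * 2 ^ (c - 1) := by
        rw [← pow_succ']
        congr 1
        omega
      omega
    have hfinal : (Finset.image (fun p : (Fin c → Bool) × Bool => cod p.1 p.2)
        Finset.univ).card ≤ 16 * t ^ 2 := by omega
    calc ((Finset.image (fun p : (Fin c → Bool) × Bool => cod p.1 p.2)
          Finset.univ).card : ℝ) ≤ (16 * t ^ 2 : ℕ) := by exact_mod_cast hfinal
      _ = 16 * (t : ℝ) ^ 2 := by push_cast; ring
end

section
/- (Hajnal) For every finite graph G with at least one vertex, the cardinality of the intersection of all maximum independent sets of G plus the cardinality of the union of all maximum independent sets of G is at least 2·α(G). -/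
open Finset in
lemma indep_card_le {V : Type*} [Fintype V] (G : SimpleGraph V) {s : Finset V}
    (hs : IsIndepF G s) : s.card ≤ indepNum G := by
  apply le_csSup
  · exact ⟨Fintype.card V, fun n ⟨t, _, ht⟩ => ht ▸ t.card_le_univ⟩
  · exact ⟨s, hs, rfl⟩

lemma exists_max_indep {V : Type*} [Fintype V] (G : SimpleGraph V) :
    ∃ A : Finset V, IsMaxIndep G A := by
  have h : indepNum G ∈ {n | ∃ s : Finset V, IsIndepF G s ∧ s.card = n} := by
    apply Nat.sSup_mem
    · exact ⟨0, ∅, by simp [IsIndepF], rfl⟩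
    · exact ⟨Fintype.card V, fun n ⟨t, _, ht⟩ => ht ▸ t.card_le_univ⟩
  obtain ⟨s, hs, hc⟩ := h
  exact ⟨s, hs, hc⟩

open Finset in
lemma hajnal_finset {V : Type*} [Fintype V] [DecidableEq V] (G : SimpleGraph V)
    (F : Finset (Finset V)) (hne : F.Nonempty) (hmax : ∀ s ∈ F, IsMaxIndep G s) :
    2 * indepNum G ≤ (F.inf id).card + (F.sup id).card := by
  induction hne using Finset.Nonempty.cons_induction with
  | singleton A =>
      simp only [inf_singleton, sup_singleton, id]
      have := (hmax A (by simp)).2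
      omega
  | cons A F hA hF ih =>
      simp only [Finset.inf_cons, Finset.sup_cons, id] at *
      have hAmax : IsMaxIndep G A := hmax A (by simp)
      have hmax' : ∀ s ∈ F, IsMaxIndep G s := fun s hs => hmax s (by simp [hs])
      have ih' := ih hmax'
      set I' := F.inf id with hI'
      set U' := F.sup id with hU'
      obtain ⟨s₀, hs₀⟩ := hF
      have hI'sub : ∀ s ∈ F, I' ⊆ s := fun s hs => Finset.le_iff_subset.mp (Finset.inf_le hs)
      have hI'indep : IsIndepF G I' := fun a ha b hb =>
        (hmax' s₀ hs₀).1 a (hI'sub s₀ hs₀ ha) b (hI'sub s₀ hs₀ hb)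
      -- key independent set T
      have hT : IsIndepF G ((I' \ A) ∪ (U' ∩ A)) := by
        intro a ha b hb
        simp only [Finset.mem_union, Finset.mem_sdiff, Finset.mem_inter] at ha hb
        rcases ha with ⟨ha1, _⟩ | ⟨haU, haA⟩
        · rcases hb with ⟨hb1, _⟩ | ⟨hbU, hbA⟩
          · exact hI'indep a ha1 b hb1
          · obtain ⟨s, hs, hbs⟩ := Finset.mem_sup.mp hbU
            exact (hmax' s hs).1 a (hI'sub s hs ha1) b hbs
        · rcases hb with ⟨hb1, _⟩ | ⟨hbU, hbA⟩
          · obtain ⟨s, hs, has⟩ := Finset.mem_sup.mp haU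
            exact (hmax' s hs).1 a has b (hI'sub s hs hb1)
          · exact hAmax.1 a haA b hbA
      have hTdisj : Disjoint (I' \ A) (U' ∩ A) := by
        apply Finset.disjoint_left.mpr
        intro a ha hb
        exact (Finset.mem_sdiff.mp ha).2 (Finset.mem_inter.mp hb).2
      have hTcard : (I' \ A).card + (U' ∩ A).card ≤ indepNum G := by
        rw [← Finset.card_union_of_disjoint hTdisj]
        exact indep_card_le G hT
      have h1 : (I' ∩ A).card + (I' \ A).card = I'.card :=
        Finset.card_inter_add_card_sdiff I' A
      have h2 : (A ∪ U').card + (A ∩ U').card = A.card + U'.card :=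
        Finset.card_union_add_card_inter A U'
      have h3 : A ∩ I' = I' ∩ A := Finset.inter_comm A I'
      have h4 : A ∩ U' = U' ∩ A := Finset.inter_comm A U'
      have h5 : A.card = indepNum G := hAmax.2
      have : A ⊓ I' = A ∩ I' := rfl
      have h6 : A ⊔ U' = A ∪ U' := rfl
      rw [this, h6, h3]
      rw [h4] at h2
      omega

/-- Hajnal's theorem: in any finite nonempty graph, the size of the intersection of all
maximum independent sets plus the size of their union is at least `2·α(G)`. -/
theorem hajnal_inter_union (V : Type*) [Fintype V] [Nonempty V] (G : SimpleGraph V) :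
    2 * indepNum G ≤
      Set.ncard {v : V | ∀ s : Finset V, IsMaxIndep G s → v ∈ s} +
        Set.ncard {v : V | ∃ s : Finset V, IsMaxIndep G s ∧ v ∈ s} := by
  classical
  set F : Finset (Finset V) := Finset.univ.filter (IsMaxIndep G) with hF
  obtain ⟨A, hA⟩ := exists_max_indep G
  have hne : F.Nonempty := ⟨A, by simp [hF, hA]⟩
  have hmax : ∀ s ∈ F, IsMaxIndep G s := fun s hs => (Finset.mem_filter.mp hs).2
  have key := hajnal_finset G F hne hmax
  have e1 : {v : V | ∀ s : Finset V, IsMaxIndep G s → v ∈ s} = ↑(F.inf id) := by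
    ext v
    simp only [Set.mem_setOf_eq, Finset.mem_coe]
    constructor
    · intro h
      rw [Finset.mem_inf]
      intro s hs
      exact h s (hmax s hs)
    · intro h s hs
      exact Finset.mem_inf.mp h s (by simp [hF, hs])
  have e2 : {v : V | ∃ s : Finset V, IsMaxIndep G s ∧ v ∈ s} = ↑(F.sup id) := by
    ext v
    simp only [Set.mem_setOf_eq, Finset.mem_coe, Finset.mem_sup, id]
    constructor
    · rintro ⟨s, hs, hv⟩
      exact ⟨s, by simp [hF, hs], hv⟩
    · rintro ⟨s, hs, hv⟩
      exact ⟨s, hmax s hs, hv⟩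
  rw [e1, e2, Set.ncard_coe_finset, Set.ncard_coe_finset]
  exact key
end
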